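/- arXiv:1203.0946 — 7 statements merged into one kernel-verified Lean document; each statement's English description precedes it below -/
import Mathlib

section
/- Let V₁ and V₂ be finite-dimensional real vector spaces and let C₁ ⊆ V₁ and C₂ ⊆ V₂ be almost compact cones. Then Hom(C₁,C₂) = {f : V₁ → V₂ linear : f(C₁) ⊆ C₂} is an almost compact cone in the vector space of linear maps from V₁ to V₂; that is, Hom(C₁,C₂) is a convex cone that is closed, pointed (Hom(C₁,C₂) ∩ (−Hom(C₁,C₂)) = {0}), and has nonempty interior in Hom(V₁,V₂). -/
/-- A convex cone `C` in a finite-dimensional real vector space is an *almost compact cone*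
if it is a convex cone that is closed, pointed (`C ∩ (−C) = {0}`) and full-dimensional
(nonempty interior). -/
def IsACCone {V : Type*} [NormedAddCommGroup V] [NormedSpace ℝ V] (C : Set V) : Prop :=
  (∀ x ∈ C, ∀ y ∈ C, x + y ∈ C) ∧
  (∀ c : ℝ, 0 ≤ c → ∀ x ∈ C, c • x ∈ C) ∧
  IsClosed C ∧
  C ∩ (-C) = {0} ∧
  (interior C).Nonempty

/-!
If `f` and `-f` both map `C₁` into the pointed cone `C₂`, then `f` vanishes on `C₁`, whose
interior is nonempty, so `f = 0`. For the interior: each point of the compact set `C₁ ∩ S` (`S` the unit sphere) is sent to a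
positive number by some functional that is nonnegative on `C₁` (Hahn–Banach, as `C₁` is closed
and pointed); summing finitely many of them gives `ℓ` with `ℓ x ≥ u ‖x‖` on `C₁` for some `u > 0`.
If `ball y r ⊆ C₂`, every `g` with `‖g - ℓ(·) y‖ < u r` satisfies `g x ∈ ball (ℓ x • y) (ℓ x * r)
= ℓ x • ball y r ⊆ C₂` for `x ∈ C₁`.
-/

open Set Metric
open scoped Pointwise

lemma LinearMap.eq_zero_of_eqOn_zero_of_interior_nonempty {𝕜 M N : Type*}
    [NontriviallyNormedField 𝕜] [AddCommGroup M] [TopologicalSpace M] [ContinuousAdd M]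
    [Module 𝕜 M] [ContinuousSMul 𝕜 M] [AddCommGroup N] [Module 𝕜 N]
    {f : M →ₗ[𝕜] N} {s : Set M} (hs : (interior s).Nonempty) (hf : s.EqOn f 0) : f = 0 :=
  LinearMap.ker_eq_top.1 <| (LinearMap.ker f).eq_top_of_nonempty_interior' <|
    hs.mono <| interior_mono fun _ hx => LinearMap.mem_ker.2 (hf hx)

lemma zero_mem_of_inter_neg_eq_zero {V : Type*} [Zero V] [Neg V] {C : Set V}
    (hpt : C ∩ -C = {0}) : (0 : V) ∈ C :=
  (hpt.symm.subset rfl).1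

section Cone

variable {V : Type*} [NormedAddCommGroup V] [NormedSpace ℝ V] {C : Set V}

lemma convex_of_add_mem_of_smul_mem (hadd : ∀ x ∈ C, ∀ y ∈ C, x + y ∈ C)
    (hsmul : ∀ c : ℝ, 0 ≤ c → ∀ x ∈ C, c • x ∈ C) : Convex ℝ C :=
  fun x hx y hy a b ha hb _ => hadd _ (hsmul a ha x hx) _ (hsmul b hb y hy)

lemma exists_nonneg_on_pos_of_neg_notMem (hadd : ∀ x ∈ C, ∀ y ∈ C, x + y ∈ C)
    (hsmul : ∀ c : ℝ, 0 ≤ c → ∀ x ∈ C, c • x ∈ C) (hC : IsClosed C) (h0 : (0 : V) ∈ C)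
    {x : V} (hx : -x ∉ C) : ∃ ℓ : V →L[ℝ] ℝ, (∀ c ∈ C, 0 ≤ ℓ c) ∧ 0 < ℓ x := by
  obtain ⟨ℓ, u, hℓx, hℓC⟩ :=
    geometric_hahn_banach_point_closed (convex_of_add_mem_of_smul_mem hadd hsmul) hC hx
  have hu : u < 0 := by simpa using hℓC 0 h0
  refine ⟨ℓ, fun c hc => ?_, by linarith [ℓ.map_neg x]⟩
  -- otherwise a nonnegative multiple of `c` lies in `C` and has `ℓ`-value exactly `u`
  by_contra! hneg
  have := hℓC ((u / ℓ c) • c) (hsmul _ (div_nonneg_of_nonpos hu.le hneg.le) c hc)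
  rw [map_smul, smul_eq_mul, div_mul_cancel₀ _ hneg.ne] at this
  exact this.false

lemma exists_dual_pos_on_sphere [FiniteDimensional ℝ V] (hadd : ∀ x ∈ C, ∀ y ∈ C, x + y ∈ C)
    (hsmul : ∀ c : ℝ, 0 ≤ c → ∀ x ∈ C, c • x ∈ C) (hC : IsClosed C) (hpt : C ∩ -C = {0}) :
    ∃ (ℓ : V →L[ℝ] ℝ) (u : ℝ), 0 < u ∧ ∀ x ∈ C ∩ sphere 0 1, u ≤ ℓ x := by
  have hS : IsCompact (C ∩ sphere (0 : V) 1) := (isCompact_sphere 0 1).inter_left hC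
  have hcover : C ∩ sphere (0 : V) 1 ⊆
      ⋃ ℓ : {ℓ : V →L[ℝ] ℝ // ∀ c ∈ C, 0 ≤ ℓ c}, {x | 0 < ℓ.1 x} := by
    rintro x ⟨hxC, hx1⟩
    have hx : -x ∉ C := fun hnx => by
      have : x ∈ C ∩ -C := ⟨hxC, hnx⟩
      simp_all
    obtain ⟨ℓ, hℓC, hℓx⟩ :=
      exists_nonneg_on_pos_of_neg_notMem hadd hsmul hC (zero_mem_of_inter_neg_eq_zero hpt) hx
    exact mem_iUnion.2 ⟨⟨ℓ, hℓC⟩, hℓx⟩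
  obtain ⟨t, ht⟩ := hS.elim_finite_subcover _
    (fun ℓ => isOpen_lt continuous_const ℓ.1.continuous) hcover
  have hpos : ∀ x ∈ C ∩ sphere (0 : V) 1, 0 < (∑ ℓ ∈ t, ℓ.1) x := by
    intro x hx
    obtain ⟨ℓ, hℓt, hℓx⟩ := mem_iUnion₂.1 (ht hx)
    rw [sum_apply]
    exact Finset.sum_pos' (fun ℓ _ => ℓ.2 x hx.1) ⟨ℓ, hℓt, hℓx⟩
  obtain ⟨u, hu, hmin⟩ := hS.exists_forall_le' (∑ ℓ ∈ t, ℓ.1).continuous.continuousOn hpos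
  exact ⟨_, u, hu, hmin⟩

lemma mul_norm_le_of_le_on_sphere (hsmul : ∀ c : ℝ, 0 ≤ c → ∀ x ∈ C, c • x ∈ C)
    {ℓ : V →L[ℝ] ℝ} {u : ℝ} (hℓ : ∀ x ∈ C ∩ sphere 0 1, u ≤ ℓ x) {x : V} (hx : x ∈ C) :
    u * ‖x‖ ≤ ℓ x := by
  rcases eq_or_ne x 0 with rfl | hx0
  · simp
  have hnx : 0 < ‖x‖ := norm_pos_iff.2 hx0
  have := hℓ (‖x‖⁻¹ • x) ⟨hsmul _ (inv_nonneg.2 hnx.le) x hx, by simp [norm_smul, hnx.ne']⟩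
  rw [map_smul, smul_eq_mul, le_inv_mul_iff₀ hnx] at this
  linarith

lemma exists_dual_ge_mul_norm [FiniteDimensional ℝ V] (hadd : ∀ x ∈ C, ∀ y ∈ C, x + y ∈ C)
    (hsmul : ∀ c : ℝ, 0 ≤ c → ∀ x ∈ C, c • x ∈ C) (hC : IsClosed C) (hpt : C ∩ -C = {0}) :
    ∃ (ℓ : V →L[ℝ] ℝ) (u : ℝ), 0 < u ∧ ∀ x ∈ C, u * ‖x‖ ≤ ℓ x :=
  let ⟨ℓ, u, hu, hℓ⟩ := exists_dual_pos_on_sphere hadd hsmul hC hpt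
  ⟨ℓ, u, hu, fun _ hx => mul_norm_le_of_le_on_sphere hsmul hℓ hx⟩

lemma ball_smul_subset_of_ball_subset (hsmul : ∀ c : ℝ, 0 ≤ c → ∀ x ∈ C, c • x ∈ C)
    {y : V} {r t : ℝ} (hball : ball y r ⊆ C) (ht : 0 < t) : ball (t • y) (t * r) ⊆ C := by
  have := smul_ball ht.ne' y r
  rw [Real.norm_of_nonneg ht.le] at this
  rw [← this]
  rintro _ ⟨z, hz, rfl⟩
  exact hsmul t ht.le z (hball hz)

end Cone

section HomCone

variable {V₁ V₂ : Type*} [NormedAddCommGroup V₁] [NormedSpace ℝ V₁]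
  [NormedAddCommGroup V₂] [NormedSpace ℝ V₂]

def homCone (C₁ : Set V₁) (C₂ : Set V₂) : Set (V₁ →L[ℝ] V₂) := {f | ∀ x ∈ C₁, f x ∈ C₂}

variable {C₁ : Set V₁} {C₂ : Set V₂}

lemma isClosed_homCone (h : IsClosed C₂) : IsClosed (homCone C₁ C₂) := by
  simp only [homCone, ofPred_forall]
  exact isClosed_biInter fun x _ => h.preimage (ContinuousLinearMap.apply ℝ V₂ x).continuous

lemma homCone_inter_neg_homCone (h₁ : (interior C₁).Nonempty) (h₂ : C₂ ∩ -C₂ = {0}) :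
    homCone C₁ C₂ ∩ -homCone C₁ C₂ = {0} := by
  have h0 := zero_mem_of_inter_neg_eq_zero h₂
  refine eq_singleton_iff_unique_mem.2 ⟨⟨fun _ _ => h0, by simpa [homCone] using fun _ _ => h0⟩, ?_⟩
  rintro f ⟨hf, hnf⟩
  have hf0 : C₁.EqOn f 0 := fun x hx => by
    have : f x ∈ C₂ ∩ -C₂ := ⟨hf x hx, by simpa using hnf x hx⟩
    simpa [h₂] using this
  exact ContinuousLinearMap.coe_injective
    (LinearMap.eq_zero_of_eqOn_zero_of_interior_nonempty h₁ hf0)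

lemma ball_smulRight_subset_homCone (hsmul₂ : ∀ c : ℝ, 0 ≤ c → ∀ x ∈ C₂, c • x ∈ C₂)
    {ℓ : V₁ →L[ℝ] ℝ} {u : ℝ} (hu : 0 < u) (hℓ : ∀ x ∈ C₁, u * ‖x‖ ≤ ℓ x)
    {y : V₂} {r : ℝ} (hr : 0 < r) (hball : ball y r ⊆ C₂) :
    ball (ℓ.smulRight y) (u * r) ⊆ homCone C₁ C₂ := by
  intro g hg x hx
  rcases eq_or_ne x 0 with rfl | hx0
  · simpa using hsmul₂ 0 le_rfl y (hball (mem_ball_self hr))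
  have hnx : 0 < ‖x‖ := norm_pos_iff.2 hx0
  have hℓx : 0 < ℓ x := (mul_pos hu hnx).trans_le (hℓ x hx)
  refine ball_smul_subset_of_ball_subset hsmul₂ hball hℓx ?_
  calc dist (g x) (ℓ x • y) = ‖(g - ℓ.smulRight y) x‖ := by simp [dist_eq_norm]
    _ ≤ ‖g - ℓ.smulRight y‖ * ‖x‖ := (g - ℓ.smulRight y).le_opNorm x
    _ < u * r * ‖x‖ := mul_lt_mul_of_pos_right (mem_ball_iff_norm.1 hg) hnx
    _ ≤ ℓ x * r := by nlinarith [hℓ x hx]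

lemma interior_homCone_nonempty [FiniteDimensional ℝ V₁]
    (hadd₁ : ∀ x ∈ C₁, ∀ y ∈ C₁, x + y ∈ C₁) (hsmul₁ : ∀ c : ℝ, 0 ≤ c → ∀ x ∈ C₁, c • x ∈ C₁)
    (hcl₁ : IsClosed C₁) (hpt₁ : C₁ ∩ -C₁ = {0})
    (hsmul₂ : ∀ c : ℝ, 0 ≤ c → ∀ x ∈ C₂, c • x ∈ C₂) (hint₂ : (interior C₂).Nonempty) :
    (interior (homCone C₁ C₂)).Nonempty := by
  obtain ⟨ℓ, u, hu, hℓ⟩ := exists_dual_ge_mul_norm hadd₁ hsmul₁ hcl₁ hpt₁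
  obtain ⟨y, hy⟩ := hint₂
  obtain ⟨r, hr, hball⟩ := Metric.isOpen_iff.1 isOpen_interior y hy
  exact ⟨ℓ.smulRight y, mem_interior.2 ⟨_,
    ball_smulRight_subset_homCone hsmul₂ hu hℓ hr (hball.trans interior_subset),
    isOpen_ball, mem_ball_self (mul_pos hu hr)⟩⟩

end HomCone

theorem hom_cone_is_almost_compact_general {V₁ V₂ : Type*}
    [NormedAddCommGroup V₁] [NormedSpace ℝ V₁] [FiniteDimensional ℝ V₁]
    [NormedAddCommGroup V₂] [NormedSpace ℝ V₂]
    (C₁ : Set V₁) (C₂ : Set V₂) (h₁ : IsACCone C₁) (h₂ : IsACCone C₂) :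
    IsACCone {f : V₁ →L[ℝ] V₂ | ∀ x ∈ C₁, f x ∈ C₂} := by
  obtain ⟨hadd₁, hsmul₁, hcl₁, hpt₁, hint₁⟩ := h₁
  obtain ⟨hadd₂, hsmul₂, hcl₂, hpt₂, hint₂⟩ := h₂
  exact ⟨fun f hf g hg x hx => hadd₂ _ (hf x hx) _ (hg x hx),
    fun c hc f hf x hx => hsmul₂ c hc _ (hf x hx),
    isClosed_homCone hcl₂, homCone_inter_neg_homCone hint₁ hpt₂,
    interior_homCone_nonempty hadd₁ hsmul₁ hcl₁ hpt₁ hsmul₂ hint₂⟩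

/-- If `C₁ ⊆ V₁` and `C₂ ⊆ V₂` are almost compact cones, then
`Hom(C₁,C₂) = {f : V₁ → V₂ linear | f(C₁) ⊆ C₂}` is an almost compact cone in the space of
linear maps from `V₁` to `V₂` (in finite dimension, all linear maps are continuous). -/
theorem hom_cone_is_almost_compact {V₁ V₂ : Type*}
    [NormedAddCommGroup V₁] [NormedSpace ℝ V₁] [FiniteDimensional ℝ V₁]
    [NormedAddCommGroup V₂] [NormedSpace ℝ V₂] [FiniteDimensional ℝ V₂]
    (C₁ : Set V₁) (C₂ : Set V₂) (h₁ : IsACCone C₁) (h₂ : IsACCone C₂) :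
    IsACCone {f : V₁ →L[ℝ] V₂ | ∀ x ∈ C₁, f x ∈ C₂} :=
  hom_cone_is_almost_compact_general C₁ C₂ h₁ h₂
end

section
/- Let V₁ and V₂ be finite-dimensional real vector spaces and let C₁ ⊆ V₁ and C₂ ⊆ V₂ be almost compact cones. Then the tensor product cone C₁ ⊗ C₂ is an almost compact cone in V₁ ⊗ V₂; that is, C₁ ⊗ C₂ is a convex cone that is closed, pointed ((C₁⊗C₂) ∩ (−(C₁⊗C₂)) = {0}), and has nonempty interior in V₁ ⊗ V₂. -/
open Set Module PointedCone
open scoped Pointwise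

section Caratheodory

variable {𝕜 E : Type*} [Field 𝕜] [LinearOrder 𝕜] [IsStrictOrderedRing 𝕜]
  [AddCommGroup E] [Module 𝕜 E] [FiniteDimensional 𝕜 E]

theorem exists_stdSimplex_sum_smul_eq_of_mem_convexHull {s : Set E} {x : E}
    (hx : x ∈ convexHull 𝕜 s) :
    ∃ w ∈ stdSimplex 𝕜 (Fin (finrank 𝕜 E + 1)), ∃ z : Fin (finrank 𝕜 E + 1) → E,
      (∀ i, z i ∈ s) ∧ ∑ i, w i • z i = x := by
  obtain ⟨c, hc⟩ := convexHull_nonempty_iff.1 ⟨x, hx⟩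
  obtain ⟨ι, _, z, w, hzs, hind, hw, hw₁, rfl⟩ := eq_pos_convex_span_of_mem_convexHull hx
  have hcard : Fintype.card ι ≤ Fintype.card (Fin (finrank 𝕜 E + 1)) := by
    simpa using hind.card_le_finrank_succ.trans (Nat.succ_le_succ (Submodule.finrank_le _))
  obtain ⟨e⟩ := Function.Embedding.nonempty_of_card_le hcard
  -- transport the weights and points along `e`, with weight `0` at the indices it misses
  have hout : ∀ j ∉ range e, ¬∃ i, e i = j := fun j hj => by simpa using hj
  refine ⟨Function.extend e w fun _ => 0, ⟨fun j => ?_, ?_⟩, Function.extend e z fun _ => c,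
    fun j => ?_, ?_⟩
  · by_cases hj : j ∈ range e
    · obtain ⟨i, rfl⟩ := hj; rw [e.injective.extend_apply]; exact (hw i).le
    · rw [Function.extend_apply' _ _ _ (hout j hj)]
  · rw [← hw₁]
    exact (Fintype.sum_of_injective e e.injective w (Function.extend e w fun _ => 0)
      (fun j hj => Function.extend_apply' _ _ _ (hout j hj))
      fun i => (e.injective.extend_apply _ _ i).symm).symm
  · by_cases hj : j ∈ range e
    · obtain ⟨i, rfl⟩ := hj; rw [e.injective.extend_apply]; exact hzs (mem_range_self i)
    · rw [Function.extend_apply' _ _ _ (hout j hj)]; exact hc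
  · exact (Fintype.sum_of_injective e e.injective (fun i => w i • z i)
      (fun j => Function.extend e w (fun _ => 0) j • Function.extend e z (fun _ => c) j)
      (fun j hj => by rw [Function.extend_apply' _ _ _ (hout j hj), zero_smul])
      fun i => by rw [e.injective.extend_apply, e.injective.extend_apply]).symm

end Caratheodory

theorem IsCompact.convexHull {E : Type*} [AddCommGroup E] [Module ℝ E] [TopologicalSpace E]
    [IsTopologicalAddGroup E] [ContinuousSMul ℝ E] [FiniteDimensional ℝ E] {s : Set E}
    (hs : IsCompact s) : IsCompact (_root_.convexHull ℝ s) := by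
  have hcarath : _root_.convexHull ℝ s =
      (fun p : (Fin (finrank ℝ E + 1) → ℝ) × (Fin (finrank ℝ E + 1) → E) => ∑ i, p.1 i • p.2 i) ''
        (stdSimplex ℝ _ ×ˢ univ.pi fun _ => s) := by
    refine Subset.antisymm (fun x hx => ?_) ?_
    · obtain ⟨w, hw, z, hz, rfl⟩ := exists_stdSimplex_sum_smul_eq_of_mem_convexHull hx
      exact ⟨(w, z), ⟨hw, fun i _ => hz i⟩, rfl⟩
    · rintro _ ⟨⟨w, z⟩, ⟨hw, hz⟩, rfl⟩
      exact (convex_convexHull ℝ s).sum_mem (fun i _ => hw.1 i) hw.2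
        fun i _ => subset_convexHull ℝ s (hz i trivial)
  rw [hcarath]
  exact ((isCompact_stdSimplex _ _).prod (isCompact_univ_pi fun _ => hs)).image (by fun_prop)

section ConeHull

variable {𝕜 E : Type*} [Field 𝕜] [LinearOrder 𝕜] [IsStrictOrderedRing 𝕜]
  [AddCommGroup E] [Module 𝕜 E]

theorem PointedCone.exists_mem_smul_convexHull_of_mem_hull {K : Set E} (hK : K.Nonempty) {z : E}
    (hz : z ∈ hull 𝕜 K) : ∃ a : 𝕜, 0 ≤ a ∧ z ∈ a • convexHull 𝕜 K := by
  induction hz using Submodule.span_induction with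
  | mem x hx => exact ⟨1, zero_le_one, by rw [one_smul]; exact subset_convexHull 𝕜 K hx⟩
  | zero => exact ⟨0, le_rfl, by rw [zero_smul_set hK.convexHull]; rfl⟩
  | add x y _ _ hx hy =>
    obtain ⟨a, ha, hxa⟩ := hx
    obtain ⟨b, hb, hyb⟩ := hy
    exact ⟨a + b, add_nonneg ha hb, (convex_convexHull 𝕜 K).add_smul ha hb ▸ add_mem_add hxa hyb⟩
  | smul c x _ hx =>
    obtain ⟨a, ha, hxa⟩ := hx
    exact ⟨c * a, mul_nonneg c.2 ha, by rw [mul_smul]; exact smul_mem_smul_set hxa⟩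

theorem PointedCone.hull_inter_neg_eq_zero_of_eq_one {K : Set E} {g : E →ₗ[𝕜] 𝕜}
    (hg : ∀ x ∈ K, g x = 1) :
    (hull 𝕜 K : Set E) ∩ -(hull 𝕜 K : Set E) = {0} := by
  rcases K.eq_empty_or_nonempty with rfl | hK
  · simp
  have hgD : ∀ x ∈ convexHull 𝕜 K, g x = 1 :=
    fun x hx => convexHull_min hg (convex_hyperplane g.isLinear 1) hx
  have hpos : ∀ z ∈ hull 𝕜 K, 0 ≤ g z ∧ (g z = 0 → z = 0) := by
    intro z hz
    obtain ⟨a, ha, d, hd, rfl⟩ := exists_mem_smul_convexHull_of_mem_hull hK hz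
    simp only [smul_eq_mul, map_smul, hgD d hd, mul_one, smul_eq_zero]
    exact ⟨ha, Or.inl⟩
  refine Subset.antisymm (fun z ⟨hz, hz'⟩ => ?_) (by simp)
  have h1 := hpos z hz
  have h2 := hpos (-z) hz'
  rw [map_neg] at h2
  exact h1.2 (by linarith [h1.1, h2.1])

theorem PointedCone.mem_hull_inter_preimage_one {C : Set E}
    (hC : ∀ c : 𝕜, 0 ≤ c → ∀ x ∈ C, c • x ∈ C) {f : E →ₗ[𝕜] 𝕜}
    (hf : ∀ x ∈ C, x ≠ 0 → 0 < f x) {x : E} (hx : x ∈ C) : x ∈ hull 𝕜 (C ∩ f ⁻¹' {1}) := by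
  rcases eq_or_ne x 0 with rfl | hx0
  · exact zero_mem _
  have hfx := hf x hx hx0
  have : (f x)⁻¹ • x ∈ C ∩ f ⁻¹' {1} := ⟨hC _ (inv_nonneg.2 hfx.le) x hx, by simp [hfx.ne']⟩
  simpa [hfx.ne'] using (hull 𝕜 _).smul_mem hfx.le (subset_hull this)

end ConeHull

section FiniteDimensional

variable {E : Type*} [NormedAddCommGroup E] [NormedSpace ℝ E] [FiniteDimensional ℝ E]

theorem PointedCone.isClosed_hull_of_isCompact {K : Set E} (hK : IsCompact K)
    {g : StrongDual ℝ E} (hg : ∀ x ∈ K, g x = 1) : IsClosed (hull ℝ K : Set E) := by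
  rcases K.eq_empty_or_nonempty with rfl | hKne
  · simp
  have hgD : ∀ x ∈ convexHull ℝ K, g x = 1 :=
    fun x hx => convexHull_min hg (convex_hyperplane g.toLinearMap.isLinear 1) hx
  -- below the level `g = M` the cone is the compact set `[0, M] • conv K`
  refine isClosed_of_closure_subset fun z hz => ?_
  set Q := (fun p : ℝ × E => p.1 • p.2) '' (Icc 0 (g z + 1) ×ˢ convexHull ℝ K)
  have hQ : IsCompact Q := (isCompact_Icc.prod hK.convexHull).image (by fun_prop)
  have hQK : Q ⊆ hull ℝ K := by
    rintro _ ⟨⟨a, d⟩, ⟨⟨ha, -⟩, hd⟩, rfl⟩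
    exact (hull ℝ K).smul_mem ha (convexHull_min subset_hull (hull ℝ K).convex hd)
  have hKQ : {y | g y < g z + 1} ∩ hull ℝ K ⊆ Q := by
    rintro y ⟨hy, hyK⟩
    obtain ⟨a, ha, d, hd, rfl⟩ := exists_mem_smul_convexHull_of_mem_hull hKne hyK
    have hga : g (a • d) = a := by simp [hgD d hd]
    exact ⟨(a, d), ⟨⟨ha, by rw [mem_ofPred_eq, hga] at hy; linarith⟩, hd⟩, rfl⟩
  have hzQ : z ∈ closure ({y | g y < g z + 1} ∩ hull ℝ K) :=
    (isOpen_lt g.continuous continuous_const).inter_closure ⟨by simp, hz⟩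
  exact hQK (hQ.isClosed.closure_subset_iff.2 hKQ hzQ)

theorem PointedCone.interior_nonempty_of_span_eq_top (C : PointedCone ℝ E)
    (hC : Submodule.span ℝ (C : Set E) = ⊤) : (interior (C : Set E)).Nonempty := by
  rw [C.convex.interior_nonempty_iff_affineSpan_eq_top,
    AffineSubspace.affineSpan_eq_top_iff_vectorSpan_eq_top_of_nonempty ℝ E E ⟨0, C.zero_mem⟩,
    vectorSpan_eq_span_vsub_set_right ℝ C.zero_mem]
  simpa using hC

theorem ProperCone.exists_strongDual_mul_norm_le (C : ProperCone ℝ E)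
    (hC : (C : Set E) ∩ -C = {0}) :
    ∃ f : StrongDual ℝ E, ∃ m > 0, ∀ x ∈ C, m * ‖x‖ ≤ f x := by
  set s := (C : Set E) ∩ Metric.sphere 0 1
  have hs : IsCompact s :=
    (isCompact_sphere 0 1).of_isClosed_subset (C.isClosed.inter Metric.isClosed_sphere)
      inter_subset_right
  have hsep : ∀ x ∈ s, ∃ f : StrongDual ℝ E, (∀ y ∈ C, 0 ≤ f y) ∧ 0 < f x := by
    rintro x ⟨hxC, hx1⟩
    have hx : -x ∉ C := fun hx' => by
      have : x ∈ (C : Set E) ∩ -C := ⟨hxC, by simpa using hx'⟩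
      rw [hC] at this
      simp_all
    obtain ⟨f, hf, hfx⟩ := C.hyperplane_separation_point hx
    exact ⟨f, hf, by simpa using hfx⟩
  -- the sum of finitely many of these functionals is positive on all of `s`
  choose! F hF hFpos using hsep
  obtain ⟨t, hts, hst⟩ := hs.elim_nhds_subcover (fun x => {y | 0 < F x y})
    fun x hx => (isOpen_lt continuous_const (F x).continuous).mem_nhds (hFpos x hx)
  set f := ∑ x ∈ t, F x
  have hfs : ∀ y ∈ s, 0 < f y := by
    intro y hy
    obtain ⟨x, hxt, hxy⟩ := mem_iUnion₂.1 (hst hy)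
    simp only [f, FunLike.coe_sum, Finset.sum_apply]
    exact Finset.sum_pos' (fun x' hx' => hF x' (hts x' hx') y hy.1) ⟨x, hxt, hxy⟩
  obtain ⟨m, hm, hms⟩ := hs.exists_forall_le' f.continuous.continuousOn hfs
  refine ⟨f, m, hm, fun x hx => ?_⟩
  rcases eq_or_ne x 0 with rfl | hx0
  · simp
  have hxn : 0 < ‖x‖ := norm_pos_iff.2 hx0
  have := hms (‖x‖⁻¹ • x) ⟨C.smul_mem hx (inv_nonneg.2 hxn.le), by simp [norm_smul, hxn.ne']⟩
  rw [map_smul, smul_eq_mul] at this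
  rwa [le_inv_mul_iff₀ hxn, mul_comm] at this

theorem ProperCone.isCompact_inter_preimage_one {C : ProperCone ℝ E} {f : StrongDual ℝ E} {m : ℝ}
    (hm : 0 < m) (hf : ∀ x ∈ C, m * ‖x‖ ≤ f x) : IsCompact ((C : Set E) ∩ f ⁻¹' {1}) :=
  (isCompact_closedBall 0 m⁻¹).of_isClosed_subset
    (C.isClosed.inter (isClosed_singleton.preimage f.continuous)) fun x ⟨hx, hfx⟩ => by
      rw [mem_preimage, mem_singleton_iff] at hfx
      rw [mem_closedBall_zero_iff, ← mul_one m⁻¹, le_inv_mul_iff₀ hm]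
      exact hfx ▸ hf x hx

end FiniteDimensional

section Bilinear

variable {𝕜 M N P : Type*} [Field 𝕜] [LinearOrder 𝕜] [IsStrictOrderedRing 𝕜]
  [AddCommGroup M] [Module 𝕜 M] [AddCommGroup N] [Module 𝕜 N] [AddCommGroup P] [Module 𝕜 P]

theorem PointedCone.apply_mem_hull_image2 (u : M →ₗ[𝕜] N →ₗ[𝕜] P) {s : Set M} {t : Set N}
    {x : M} {y : N} (hx : x ∈ hull 𝕜 s) (hy : y ∈ hull 𝕜 t) :
    u x y ∈ hull 𝕜 (image2 (fun x y => u x y) s t) := by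
  have := Submodule.apply_mem_map₂ (u.restrictScalars₁₂ {c : 𝕜 // 0 ≤ c} {c : 𝕜 // 0 ≤ c}) hx hy
  rwa [Submodule.map₂_span_span] at this

theorem setOf_exists_sum_eq_hull_image2 (u : M →ₗ[𝕜] N →ₗ[𝕜] P) {s : Set M} (t : Set N)
    (hs : ∀ c : 𝕜, 0 ≤ c → ∀ x ∈ s, c • x ∈ s) :
    {z : P | ∃ (k : ℕ) (a : Fin k → M) (b : Fin k → N),
      (∀ j, a j ∈ s) ∧ (∀ j, b j ∈ t) ∧ z = ∑ j, u (a j) (b j)} =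
      hull 𝕜 (image2 (fun x y => u x y) s t) := by
  ext z
  constructor
  · rintro ⟨k, a, b, ha, hb, rfl⟩
    exact Submodule.sum_mem _ fun j _ => subset_hull (mem_image2_of_mem (ha j) (hb j))
  · intro hz
    obtain ⟨k, c, p, rfl⟩ := Submodule.mem_span_set'.1 hz
    choose a ha b hb hab using fun j => (p j).2
    refine ⟨k, fun j => (c j : 𝕜) • a j, b, fun j => hs _ (c j).2 _ (ha j), hb, ?_⟩
    simp only [← hab, map_smul, LinearMap.smul_apply]
    rfl

end Bilinear

section TensorProduct

variable {R M N P : Type*} [CommRing R] [AddCommGroup M] [Module R M] [AddCommGroup N]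
  [Module R N] [AddCommGroup P] [Module R P]

theorem span_image2_eq_top_of_surjective_lift (u : M →ₗ[R] N →ₗ[R] P)
    (hu : Function.Surjective (TensorProduct.lift u)) {s : Set M} {t : Set N}
    (hs : Submodule.span R s = ⊤) (ht : Submodule.span R t = ⊤) :
    Submodule.span R (image2 (fun x y => u x y) s t) = ⊤ := by
  rw [← Submodule.map₂_span_span, hs, ht, Submodule.map₂_eq_span_image2, eq_top_iff]
  rintro w -
  obtain ⟨z, rfl⟩ := hu w
  induction z using TensorProduct.induction_on with
  | zero => simp
  | tmul x y => exact Submodule.subset_span ⟨x, trivial, y, trivial, by simp⟩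
  | add z z' hz hz' => rw [map_add]; exact add_mem hz hz'

theorem exists_linearMap_apply_apply_eq_mul (u : M →ₗ[R] N →ₗ[R] P)
    (hu : Function.Bijective (TensorProduct.lift u))
    (f₁ : M →ₗ[R] R) (f₂ : N →ₗ[R] R) : ∃ g : P →ₗ[R] R, ∀ x y, g (u x y) = f₁ x * f₂ y :=
  ⟨TensorProduct.lift ((LinearMap.mul R R).compl₁₂ f₁ f₂) ∘ₗ
    (LinearEquiv.ofBijective _ hu).symm.toLinearMap, fun x y => by
      rw [LinearMap.comp_apply, LinearEquiv.coe_coe, ← TensorProduct.lift.tmul,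
        LinearEquiv.ofBijective_symm_apply_apply]
      simp⟩

end TensorProduct

theorem LinearMap.continuous_uncurry_of_finiteDimensional {𝕜 M N P : Type*}
    [NontriviallyNormedField 𝕜] [CompleteSpace 𝕜]
    [NormedAddCommGroup M] [NormedSpace 𝕜 M] [FiniteDimensional 𝕜 M]
    [NormedAddCommGroup N] [NormedSpace 𝕜 N] [FiniteDimensional 𝕜 N]
    [NormedAddCommGroup P] [NormedSpace 𝕜 P] (u : M →ₗ[𝕜] N →ₗ[𝕜] P) :
    Continuous fun p : M × N => u p.1 p.2 :=
  let U : M →L[𝕜] N →L[𝕜] P :=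
    LinearMap.toContinuousLinearMap (LinearMap.toContinuousLinearMap.toLinearMap ∘ₗ u)
  (U.continuous.comp continuous_fst).clm_apply continuous_snd

section IsACCone

variable {V : Type*} [NormedAddCommGroup V] [NormedSpace ℝ V] {C : Set V}

def IsACCone.toProperCone (h : IsACCone C) : ProperCone ℝ V where
  carrier := C
  add_mem' hx hy := h.1 _ hx _ hy
  zero_mem' := (h.2.2.2.1.symm ▸ mem_singleton 0 : (0 : V) ∈ C ∩ -C).1
  smul_mem' c _ hx := h.2.1 c c.2 _ hx
  isClosed' := h.2.2.1

theorem IsACCone.span_eq_top (h : IsACCone C) : Submodule.span ℝ C = ⊤ := by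
  obtain ⟨x, hx⟩ := h.2.2.2.2
  exact Submodule.eq_top_of_nonempty_interior' _ ⟨x, interior_mono Submodule.subset_span hx⟩

theorem PointedCone.isACCone [FiniteDimensional ℝ V] (C : PointedCone ℝ V)
    (hclosed : IsClosed (C : Set V)) (hpointed : (C : Set V) ∩ -C = {0})
    (hspan : Submodule.span ℝ (C : Set V) = ⊤) : IsACCone (C : Set V) :=
  ⟨fun _ hx _ hy => C.add_mem hx hy, fun _ hc _ hx => C.smul_mem hc hx, hclosed, hpointed,
    C.interior_nonempty_of_span_eq_top hspan⟩

theorem IsACCone.exists_isCompact_base [FiniteDimensional ℝ V] (h : IsACCone C) :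
    ∃ f : StrongDual ℝ V, IsCompact (C ∩ f ⁻¹' {1}) ∧ C ⊆ hull ℝ (C ∩ f ⁻¹' {1}) := by
  obtain ⟨f, m, hm, hf⟩ := h.toProperCone.exists_strongDual_mul_norm_le h.2.2.2.1
  exact ⟨f, h.toProperCone.isCompact_inter_preimage_one hm hf, fun x =>
    mem_hull_inter_preimage_one h.2.1 (f := f.toLinearMap)
      fun x hx hx0 => (mul_pos hm (norm_pos_iff.2 hx0)).trans_le (hf x hx)⟩

end IsACCone

/-- Let `W`, together with the bilinear map `u : V₁ → V₂ → W`, realize the tensor product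
`V₁ ⊗ V₂` (i.e. the induced linear map `V₁ ⊗ V₂ → W` is bijective).  If `C₁ ⊆ V₁` and
`C₂ ⊆ V₂` are almost compact cones then the tensor product cone `C₁ ⊗ C₂`, consisting of all
finite sums `∑ᵢ cᵢ ⊗ dᵢ` with `cᵢ ∈ C₁`, `dᵢ ∈ C₂`, is an almost compact cone in `V₁ ⊗ V₂`. -/
theorem tensor_cone_is_almost_compact {V₁ V₂ W : Type*}
    [NormedAddCommGroup V₁] [NormedSpace ℝ V₁] [FiniteDimensional ℝ V₁]
    [NormedAddCommGroup V₂] [NormedSpace ℝ V₂] [FiniteDimensional ℝ V₂]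
    [NormedAddCommGroup W] [NormedSpace ℝ W] [FiniteDimensional ℝ W]
    (u : V₁ →ₗ[ℝ] V₂ →ₗ[ℝ] W) (hu : Function.Bijective (TensorProduct.lift u))
    (C₁ : Set V₁) (C₂ : Set V₂) (h₁ : IsACCone C₁) (h₂ : IsACCone C₂) :
    IsACCone {z : W | ∃ (k : ℕ) (a : Fin k → V₁) (b : Fin k → V₂),
      (∀ j, a j ∈ C₁) ∧ (∀ j, b j ∈ C₂) ∧ z = ∑ j, u (a j) (b j)} := by
  obtain ⟨f₁, hB₁, hC₁⟩ := h₁.exists_isCompact_base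
  obtain ⟨f₂, hB₂, hC₂⟩ := h₂.exists_isCompact_base
  obtain ⟨g, hg⟩ := exists_linearMap_apply_apply_eq_mul u hu f₁.toLinearMap f₂.toLinearMap
  set K := image2 (fun x y => u x y) (C₁ ∩ f₁ ⁻¹' {1}) (C₂ ∩ f₂ ⁻¹' {1})
  have hK : IsCompact K := by
    simp only [K, ← image_prod]
    exact (hB₁.prod hB₂).image u.continuous_uncurry_of_finiteDimensional
  have hgK : ∀ z ∈ K, g z = 1 := by
    rintro _ ⟨x, ⟨-, hx⟩, y, ⟨-, hy⟩, rfl⟩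
    rw [hg, ContinuousLinearMap.coe_coe, ContinuousLinearMap.coe_coe, hx, hy, mul_one]
  have hhull : hull ℝ (image2 (fun x y => u x y) C₁ C₂) = hull ℝ K :=
    le_antisymm (Submodule.span_le.2 <| image2_subset_iff.2 fun x hx y hy =>
        apply_mem_hull_image2 u (hC₁ hx) (hC₂ hy))
      (Submodule.span_mono (image2_subset inter_subset_left inter_subset_left))
  rw [setOf_exists_sum_eq_hull_image2 u C₂ h₁.2.1]
  refine PointedCone.isACCone _ ?_ ?_ ?_
  · rw [hhull]
    exact isClosed_hull_of_isCompact hK (g := LinearMap.toContinuousLinearMap g) hgK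
  · rw [hhull]
    exact hull_inter_neg_eq_zero_of_eq_one hgK
  · rw [Submodule.span_span_of_tower]
    exact span_image2_eq_top_of_surjective_lift u hu.2 h₁.span_eq_top h₂.span_eq_top
end

section
/- Let A ⊆ V_A and B ⊆ V_B be almost compact cones in finite-dimensional real vector spaces. Then the extreme rays of A ⊗ B are precisely the rays ℝ₊·(a ⊗ b) where ℝ₊·a is an extreme ray of A and ℝ₊·b is an extreme ray of B: every such ray ℝ₊·(a ⊗ b) is an extreme ray of A ⊗ B, and every extreme ray of A ⊗ B has this form. -/
open scoped TensorProduct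

/-- `F` is a face of the convex cone `C`: a subcone of `C` such that whenever
`x + y ∈ F` with `x, y ∈ C` one has `x, y ∈ F`. -/
def IsConeFace {V : Type*} [AddCommGroup V] [Module ℝ V] (C F : Set V) : Prop :=
  F ⊆ C ∧ (∀ x ∈ F, ∀ y ∈ F, x + y ∈ F) ∧ (∀ c : ℝ, 0 ≤ c → ∀ x ∈ F, c • x ∈ F) ∧
  (∀ x ∈ C, ∀ y ∈ C, x + y ∈ F → x ∈ F ∧ y ∈ F)

/-- The ray `ℝ₊·x` spanned by `x`. -/
def rayOf {V : Type*} [AddCommGroup V] [Module ℝ V] (x : V) : Set V :=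
  {y | ∃ c : ℝ, 0 ≤ c ∧ y = c • x}

/-- `ℝ₊·x` is an extreme ray of the convex cone `C`: `x` is a nonzero element of `C` whose
ray is a face of `C`. -/
def IsExtremeRayOf {V : Type*} [AddCommGroup V] [Module ℝ V] (C : Set V) (x : V) : Prop :=
  x ≠ 0 ∧ x ∈ C ∧ IsConeFace C (rayOf x)

/-- The tensor product cone `C₁ ⊗ C₂ ⊆ V₁ ⊗ V₂`: all finite sums `∑ᵢ cᵢ ⊗ dᵢ` with
`cᵢ ∈ C₁` and `dᵢ ∈ C₂`. -/
def tensorCone {V₁ V₂ : Type*} [AddCommGroup V₁] [Module ℝ V₁] [AddCommGroup V₂] [Module ℝ V₂]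
    (C₁ : Set V₁) (C₂ : Set V₂) : Set (V₁ ⊗[ℝ] V₂) :=
  {z | ∃ (k : ℕ) (a : Fin k → V₁) (b : Fin k → V₂),
    (∀ j, a j ∈ C₁) ∧ (∀ j, b j ∈ C₂) ∧ z = ∑ j, a j ⊗ₜ[ℝ] b j}

/-!
A closed pointed cone in finite dimension carries a linear functional that is strictly positive
on its nonzero elements. If `∑ uᵢ ⊗ vᵢ` (with `uᵢ ∈ A`, `vᵢ ∈ B`) lies on `ℝ₊ (a ⊗ b)`,
contracting the first factor with such a functional `φ` puts the conic combination
`∑ φ(uᵢ) vᵢ` on `ℝ₊ b`; since that ray is a face, every `vᵢ` with `uᵢ ≠ 0` lies on it, and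
symmetrically every `uᵢ` with `vᵢ ≠ 0` lies on `ℝ₊ a`. So each summand lies on `ℝ₊ (a ⊗ b)`,
which is therefore a face of `A ⊗ B`.

Conversely, the summands of a decomposition of an extreme `z` lie on `ℝ₊ z`, so some summand is
a positive multiple of `z` and `z = a ⊗ b`. The face property of `ℝ₊ a` in `A` is then pulled
back from that of `ℝ₊ (a ⊗ b)` along the injective map `x ↦ x ⊗ b`.
-/

open TensorProduct

section Rays

variable {V W : Type*} [AddCommGroup V] [Module ℝ V] [AddCommGroup W] [Module ℝ W]

lemma self_mem_rayOf (x : V) : x ∈ rayOf x := ⟨1, zero_le_one, (one_smul ℝ x).symm⟩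

lemma zero_mem_rayOf (x : V) : (0 : V) ∈ rayOf x := ⟨0, le_rfl, (zero_smul ℝ x).symm⟩

lemma add_mem_rayOf {x y z : V} (hy : y ∈ rayOf x) (hz : z ∈ rayOf x) : y + z ∈ rayOf x := by
  obtain ⟨c, hc, rfl⟩ := hy
  obtain ⟨d, hd, rfl⟩ := hz
  exact ⟨c + d, add_nonneg hc hd, (add_smul c d x).symm⟩

lemma smul_mem_rayOf {x y : V} {c : ℝ} (hc : 0 ≤ c) (hy : y ∈ rayOf x) : c • y ∈ rayOf x := by
  obtain ⟨d, hd, rfl⟩ := hy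
  exact ⟨c * d, mul_nonneg hc hd, (mul_smul c d x).symm⟩

lemma sum_mem_rayOf {ι : Type*} {s : Finset ι} {w : ι → V} {x : V}
    (hw : ∀ i ∈ s, w i ∈ rayOf x) : ∑ i ∈ s, w i ∈ rayOf x :=
  Finset.sum_induction w (· ∈ rayOf x) (fun _ _ => add_mem_rayOf) (zero_mem_rayOf x) hw

lemma mem_rayOf_trans {x y z : V} (hy : y ∈ rayOf x) (hx : x ∈ rayOf z) : y ∈ rayOf z := by
  obtain ⟨c, hc, rfl⟩ := hy
  exact smul_mem_rayOf hc hx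

lemma mem_rayOf_of_smul_mem {x y : V} {c : ℝ} (hc : 0 < c) (hy : c • y ∈ rayOf x) :
    y ∈ rayOf x := by
  simpa [smul_smul, inv_mul_cancel₀ hc.ne'] using smul_mem_rayOf (inv_nonneg.2 hc.le) hy

lemma LinearMap.map_mem_rayOf (f : V →ₗ[ℝ] W) {x y : V} (hy : y ∈ rayOf x) :
    f y ∈ rayOf (f x) := by
  obtain ⟨c, hc, rfl⟩ := hy
  exact ⟨c, hc, map_smul f c x⟩

lemma LinearMap.map_mem_rayOf_map_iff {f : V →ₗ[ℝ] W} (hf : Function.Injective f) {x y : V} :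
    f y ∈ rayOf (f x) ↔ y ∈ rayOf x := by
  refine ⟨fun ⟨c, hc, h⟩ => ⟨c, hc, hf (by rw [h, map_smul])⟩, f.map_mem_rayOf⟩

end Rays

structure IsConvexCone {V : Type*} [AddCommGroup V] [Module ℝ V] (C : Set V) : Prop where
  add_mem : ∀ x ∈ C, ∀ y ∈ C, x + y ∈ C
  smul_mem : ∀ c : ℝ, 0 ≤ c → ∀ x ∈ C, c • x ∈ C

section Faces

variable {V W : Type*} [AddCommGroup V] [Module ℝ V] [AddCommGroup W] [Module ℝ W]

lemma isConeFace_rayOf {C : Set V} (hsmul : ∀ c : ℝ, 0 ≤ c → ∀ x ∈ C, c • x ∈ C) {x : V}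
    (hx : x ∈ C)
    (hface : ∀ y ∈ C, ∀ z ∈ C, y + z ∈ rayOf x → y ∈ rayOf x ∧ z ∈ rayOf x) :
    IsConeFace C (rayOf x) := by
  refine ⟨?_, fun _ hy _ hz => add_mem_rayOf hy hz, fun _ hc _ hy => smul_mem_rayOf hc hy, hface⟩
  rintro _ ⟨c, hc, rfl⟩
  exact hsmul c hc x hx

lemma IsConeFace.mem_of_sum_mem {C F : Set V} (hF : IsConeFace C F)
    (hadd : ∀ x ∈ C, ∀ y ∈ C, x + y ∈ C) (h0 : (0 : V) ∈ C) {ι : Type*} [Fintype ι]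
    {w : ι → V} (hw : ∀ i, w i ∈ C) (hsum : ∑ i, w i ∈ F) (i : ι) : w i ∈ F := by
  classical
  have hrest : ∑ j ∈ Finset.univ.erase i, w j ∈ C :=
    Finset.sum_induction w (· ∈ C) (fun a b ha hb => hadd a ha b hb) h0 fun j _ => hw j
  rw [← Finset.add_sum_erase _ _ (Finset.mem_univ i)] at hsum
  exact (hF.2.2.2 _ (hw i) _ hrest hsum).1

lemma IsExtremeRayOf.mem_rayOf_of_sum_smul_mem {C : Set V} {x : V} (hx : IsExtremeRayOf C x)
    (hC : IsConvexCone C) {ι : Type*} [Fintype ι] {t : ι → ℝ} {w : ι → V} (ht : ∀ i, 0 ≤ t i)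
    (hw : ∀ i, w i ∈ C) (hsum : ∑ i, t i • w i ∈ rayOf x) {i : ι} (hi : 0 < t i) :
    w i ∈ rayOf x := by
  have h0 : (0 : V) ∈ C := by simpa using hC.smul_mem 0 le_rfl x hx.2.1
  exact mem_rayOf_of_smul_mem hi <|
    hx.2.2.mem_of_sum_mem hC.add_mem h0 (fun j => hC.smul_mem _ (ht j) _ (hw j)) hsum i

lemma IsExtremeRayOf.of_map {C : Set V} {K : Set W}
    (hsmul : ∀ c : ℝ, 0 ≤ c → ∀ x ∈ C, c • x ∈ C) {f : V →ₗ[ℝ] W}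
    (hf : Function.Injective f) (hfC : Set.MapsTo f C K) {x : V} (hx : x ∈ C)
    (h : IsExtremeRayOf K (f x)) : IsExtremeRayOf C x := by
  refine ⟨fun h0 => h.1 (by rw [h0, map_zero]), hx, isConeFace_rayOf hsmul hx ?_⟩
  rintro y hy z hz ⟨c, hc, hyz⟩
  have hsum : f y + f z ∈ rayOf (f x) := ⟨c, hc, by rw [← map_add, hyz, map_smul]⟩
  obtain ⟨hfy, hfz⟩ := h.2.2.2.2.2 _ (hfC hy) _ (hfC hz) hsum
  exact ⟨(LinearMap.map_mem_rayOf_map_iff hf).1 hfy, (LinearMap.map_mem_rayOf_map_iff hf).1 hfz⟩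

end Faces

section StrictlyPositiveFunctional

variable {V : Type*} [NormedAddCommGroup V] [NormedSpace ℝ V] [FiniteDimensional ℝ V]

/-- Compactness of the unit sphere in `C` glues the pointwise functionals into one. -/
lemma exists_dual_pos_of_forall_exists_dual {C : Set V}
    (hsmul : ∀ c : ℝ, 0 ≤ c → ∀ x ∈ C, c • x ∈ C) (hcl : IsClosed C)
    (h : ∀ x ∈ C, x ≠ 0 → ∃ f : V →L[ℝ] ℝ, (∀ y ∈ C, 0 ≤ f y) ∧ 0 < f x) :
    ∃ φ : V →L[ℝ] ℝ, ∀ x ∈ C, x ≠ 0 → 0 < φ x := by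
  choose! f hf_nonneg hf_pos using h
  set S := C ∩ Metric.sphere (0 : V) 1
  have hfS : ∀ x ∈ S, (∀ y ∈ C, 0 ≤ f x y) ∧ 0 < f x x := fun x hx =>
    have hx0 : x ≠ 0 := ne_zero_of_mem_unit_sphere ⟨x, hx.2⟩
    ⟨hf_nonneg x hx.1 hx0, hf_pos x hx.1 hx0⟩
  obtain ⟨t, htS, ht, hcover⟩ :=
    ((isCompact_sphere (0 : V) 1).inter_left hcl).elim_finite_subcover_image
      (c := fun x => {y | 0 < f x y}) (fun x _ => isOpen_lt continuous_const (f x).continuous)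
      (fun x hx => Set.mem_biUnion hx (hfS x hx).2)
  refine ⟨∑ x ∈ ht.toFinset, f x, fun y hy hy0 => ?_⟩
  have hnorm : 0 < ‖y‖ := norm_pos_iff.2 hy0
  have hyS : ‖y‖⁻¹ • y ∈ S :=
    ⟨hsmul _ (inv_nonneg.2 hnorm.le) y hy, by simp [norm_smul, hnorm.ne']⟩
  obtain ⟨x, hxt, hx⟩ := Set.mem_iUnion₂.1 (hcover hyS)
  have hxy : 0 < f x y := by
    have : 0 < ‖y‖⁻¹ * f x y := by simpa using hx
    exact pos_of_mul_pos_right this (inv_nonneg.2 hnorm.le)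
  rw [sum_apply]
  exact Finset.sum_pos' (fun z hz => (hfS z (htS (ht.mem_toFinset.1 hz))).1 y hy)
    ⟨x, ht.mem_toFinset.2 hxt, hxy⟩

lemma IsConvexCone.exists_dual_pos {C : Set V} (hC : IsConvexCone C) (hcl : IsClosed C)
    (hpt : C ∩ -C = {0}) : ∃ φ : V →L[ℝ] ℝ, ∀ x ∈ C, x ≠ 0 → 0 < φ x := by
  have h0 : (0 : V) ∈ C := (hpt.symm.subset rfl).1
  let K : ProperCone ℝ V :=
    ⟨⟨⟨⟨C, fun hx hy => hC.add_mem _ hx _ hy⟩, h0⟩, fun c x hx => hC.smul_mem c c.2 x hx⟩, hcl⟩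
  refine exists_dual_pos_of_forall_exists_dual hC.smul_mem hcl fun x hx hx0 => ?_
  have hnx : -x ∉ K := fun hnx => hx0 (hpt.subset ⟨hx, Set.mem_neg.2 hnx⟩)
  obtain ⟨f, hfK, hfx⟩ := K.hyperplane_separation_point hnx
  exact ⟨f, hfK, by simpa using hfx⟩

end StrictlyPositiveFunctional

section TensorOverField

variable {K V W : Type*} [Field K] [AddCommGroup V] [Module K V] [AddCommGroup W] [Module K W]

lemma TensorProduct.mk_flip_injective_of_ne_zero {w : W} (hw : w ≠ 0) :
    Function.Injective ((TensorProduct.mk K V W).flip w) := by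
  obtain ⟨f, hf⟩ := Module.Projective.exists_dual_eq_one K hw
  refine Function.LeftInverse.injective (g := TensorProduct.rid K V ∘ₗ f.lTensor V) fun v => ?_
  simp [hf]

lemma TensorProduct.mk_injective_of_ne_zero {v : V} (hv : v ≠ 0) :
    Function.Injective (TensorProduct.mk K V W v) := by
  obtain ⟨f, hf⟩ := Module.Projective.exists_dual_eq_one K hv
  refine Function.LeftInverse.injective (g := TensorProduct.lid K W ∘ₗ f.rTensor W) fun w => ?_
  simp [hf]

lemma TensorProduct.tmul_ne_zero {v : V} {w : W} (hv : v ≠ 0) (hw : w ≠ 0) :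
    v ⊗ₜ[K] w ≠ 0 := fun h =>
  hv (mk_flip_injective_of_ne_zero hw (by simpa using h))

end TensorOverField

section TensorCone

variable {V W : Type*} [AddCommGroup V] [Module ℝ V] [AddCommGroup W] [Module ℝ W]
  {A : Set V} {B : Set W}

lemma zero_mem_tensorCone : (0 : V ⊗[ℝ] W) ∈ tensorCone A B :=
  ⟨0, Fin.elim0, Fin.elim0, fun j => j.elim0, fun j => j.elim0, by simp⟩

lemma tmul_mem_tensorCone {a : V} {b : W} (ha : a ∈ A) (hb : b ∈ B) :
    a ⊗ₜ[ℝ] b ∈ tensorCone A B :=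
  ⟨1, fun _ => a, fun _ => b, fun _ => ha, fun _ => hb, by simp⟩

lemma add_mem_tensorCone {x y : V ⊗[ℝ] W} (hx : x ∈ tensorCone A B) (hy : y ∈ tensorCone A B) :
    x + y ∈ tensorCone A B := by
  obtain ⟨k, a, b, ha, hb, rfl⟩ := hx
  obtain ⟨m, a', b', ha', hb', rfl⟩ := hy
  refine ⟨k + m, Fin.append a a', Fin.append b b', Fin.addCases (by simpa) (by simpa),
    Fin.addCases (by simpa) (by simpa), by simp [Fin.sum_univ_add]⟩

lemma smul_mem_tensorCone (hA : ∀ c : ℝ, 0 ≤ c → ∀ x ∈ A, c • x ∈ A) {c : ℝ} (hc : 0 ≤ c)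
    {x : V ⊗[ℝ] W} (hx : x ∈ tensorCone A B) : c • x ∈ tensorCone A B := by
  obtain ⟨k, a, b, ha, hb, rfl⟩ := hx
  refine ⟨k, fun j => c • a j, b, fun j => hA c hc _ (ha j), hb, ?_⟩
  simp [Finset.smul_sum, smul_tmul']

lemma tmul_mem_rayOf_tmul {a x : V} {b y : W} (hx : x ∈ rayOf a) (hy : y ∈ rayOf b) :
    x ⊗ₜ[ℝ] y ∈ rayOf (a ⊗ₜ[ℝ] b) := by
  obtain ⟨c, hc, rfl⟩ := hx
  obtain ⟨d, hd, rfl⟩ := hy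
  exact ⟨c * d, mul_nonneg hc hd, by rw [smul_tmul_smul]⟩

lemma IsExtremeRayOf.mem_rayOf_of_sum_tmul_mem {a : V} {b : W} (hb : IsExtremeRayOf B b)
    (hB : IsConvexCone B) {φ : V →ₗ[ℝ] ℝ} (hφ : ∀ x ∈ A, x ≠ 0 → 0 < φ x) (ha : a ∈ A)
    {ι : Type*} [Fintype ι] {u : ι → V} {v : ι → W} (hu : ∀ i, u i ∈ A) (hv : ∀ i, v i ∈ B)
    (hsum : ∑ i, u i ⊗ₜ[ℝ] v i ∈ rayOf (a ⊗ₜ[ℝ] b)) {i : ι} (hi : u i ≠ 0) : v i ∈ rayOf b := by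
  have hφ_nonneg : ∀ x ∈ A, 0 ≤ φ x := by
    intro x hx
    rcases eq_or_ne x 0 with rfl | hx0
    · rw [map_zero]
    · exact (hφ x hx hx0).le
  have hcontr := ((TensorProduct.lid ℝ W).toLinearMap ∘ₗ φ.rTensor W).map_mem_rayOf hsum
  simp only [LinearMap.coe_comp, LinearEquiv.coe_coe, Function.comp_apply, map_sum,
    LinearMap.rTensor_tmul, lid_tmul] at hcontr
  exact hb.mem_rayOf_of_sum_smul_mem hB (fun j => hφ_nonneg _ (hu j)) hv
    (mem_rayOf_trans hcontr (smul_mem_rayOf (hφ_nonneg a ha) (self_mem_rayOf b))) (hφ _ (hu i) hi)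

lemma IsExtremeRayOf.tmul_mem_rayOf_of_sum_mem {a : V} {b : W} (ha : IsExtremeRayOf A a)
    (hb : IsExtremeRayOf B b) (hA : IsConvexCone A) (hB : IsConvexCone B) {φ : V →ₗ[ℝ] ℝ}
    (hφ : ∀ x ∈ A, x ≠ 0 → 0 < φ x) {ψ : W →ₗ[ℝ] ℝ} (hψ : ∀ y ∈ B, y ≠ 0 → 0 < ψ y)
    {ι : Type*} [Fintype ι] {u : ι → V} {v : ι → W} (hu : ∀ i, u i ∈ A) (hv : ∀ i, v i ∈ B)
    (hsum : ∑ i, u i ⊗ₜ[ℝ] v i ∈ rayOf (a ⊗ₜ[ℝ] b)) (i : ι) :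
    u i ⊗ₜ[ℝ] v i ∈ rayOf (a ⊗ₜ[ℝ] b) := by
  rcases eq_or_ne (u i) 0 with hu0 | hu0
  · simpa [hu0] using zero_mem_rayOf (a ⊗ₜ[ℝ] b)
  rcases eq_or_ne (v i) 0 with hv0 | hv0
  · simpa [hv0] using zero_mem_rayOf (a ⊗ₜ[ℝ] b)
  have hsum' : ∑ i, v i ⊗ₜ[ℝ] u i ∈ rayOf (b ⊗ₜ[ℝ] a) := by
    simpa using (TensorProduct.comm ℝ V W).toLinearMap.map_mem_rayOf hsum
  exact tmul_mem_rayOf_tmul (ha.mem_rayOf_of_sum_tmul_mem hA hψ hb.2.1 hv hu hsum' hv0)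
    (hb.mem_rayOf_of_sum_tmul_mem hB hφ ha.2.1 hu hv hsum hu0)

lemma IsExtremeRayOf.tmul {a : V} {b : W} (ha : IsExtremeRayOf A a) (hb : IsExtremeRayOf B b)
    (hA : IsConvexCone A) (hB : IsConvexCone B) {φ : V →ₗ[ℝ] ℝ}
    (hφ : ∀ x ∈ A, x ≠ 0 → 0 < φ x) {ψ : W →ₗ[ℝ] ℝ} (hψ : ∀ y ∈ B, y ≠ 0 → 0 < ψ y) :
    IsExtremeRayOf (tensorCone A B) (a ⊗ₜ[ℝ] b) := by
  have hmem : a ⊗ₜ[ℝ] b ∈ tensorCone A B := tmul_mem_tensorCone ha.2.1 hb.2.1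
  refine ⟨tmul_ne_zero ha.1 hb.1, hmem,
    isConeFace_rayOf (fun c hc x hx => smul_mem_tensorCone hA.smul_mem hc hx) hmem ?_⟩
  rintro _ ⟨k, u, v, hu, hv, rfl⟩ _ ⟨m, u', v', hu', hv', rfl⟩ hsum
  have hterm := ha.tmul_mem_rayOf_of_sum_mem hb hA hB hφ hψ (u := Sum.elim u u')
    (v := Sum.elim v v') (Sum.forall.2 ⟨hu, hu'⟩) (Sum.forall.2 ⟨hv, hv'⟩)
    (by simpa [Fintype.sum_sum_type] using hsum)
  exact ⟨sum_mem_rayOf fun i _ => hterm (.inl i), sum_mem_rayOf fun i _ => hterm (.inr i)⟩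

lemma IsExtremeRayOf.exists_eq_tmul (hA : ∀ c : ℝ, 0 ≤ c → ∀ x ∈ A, c • x ∈ A)
    {z : V ⊗[ℝ] W} (hz : IsExtremeRayOf (tensorCone A B) z) :
    ∃ a ∈ A, ∃ b ∈ B, z = a ⊗ₜ[ℝ] b := by
  obtain ⟨k, u, v, hu, hv, hzuv⟩ := hz.2.1
  obtain ⟨j, hj⟩ : ∃ j, u j ⊗ₜ[ℝ] v j ≠ 0 := by
    by_contra! h
    exact hz.1 (by simp [hzuv, h])
  obtain ⟨c, hc, hjz⟩ := hz.2.2.mem_of_sum_mem (fun _ hx _ hy => add_mem_tensorCone hx hy)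
    zero_mem_tensorCone (fun i => tmul_mem_tensorCone (hu i) (hv i)) (hzuv ▸ self_mem_rayOf z) j
  have hc0 : 0 < c := hc.lt_of_ne fun h => hj (by simp [hjz, ← h])
  refine ⟨c⁻¹ • u j, hA _ (inv_nonneg.2 hc) _ (hu j), v j, hv j, ?_⟩
  rw [← smul_tmul', hjz, inv_smul_smul₀ hc0.ne']

end TensorCone

/-- The extreme rays of `A ⊗ B` are precisely the tensor products of extreme rays of `A`
and extreme rays of `B`. -/
theorem extreme_rays_of_tensor_cone {VA VB : Type*}
    [NormedAddCommGroup VA] [NormedSpace ℝ VA] [FiniteDimensional ℝ VA]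
    [NormedAddCommGroup VB] [NormedSpace ℝ VB] [FiniteDimensional ℝ VB]
    (A : Set VA) (B : Set VB) (hA : IsACCone A) (hB : IsACCone B) :
    (∀ (a : VA) (b : VB), IsExtremeRayOf A a → IsExtremeRayOf B b →
      IsExtremeRayOf (tensorCone A B) (a ⊗ₜ[ℝ] b)) ∧
    (∀ z : VA ⊗[ℝ] VB, IsExtremeRayOf (tensorCone A B) z →
      ∃ (a : VA) (b : VB), IsExtremeRayOf A a ∧ IsExtremeRayOf B b ∧ z = a ⊗ₜ[ℝ] b) := by
  obtain ⟨hAadd, hAsmul, hAcl, hApt, -⟩ := hA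
  obtain ⟨hBadd, hBsmul, hBcl, hBpt, -⟩ := hB
  have hAc : IsConvexCone A := ⟨hAadd, hAsmul⟩
  have hBc : IsConvexCone B := ⟨hBadd, hBsmul⟩
  obtain ⟨φ, hφ⟩ := hAc.exists_dual_pos hAcl hApt
  obtain ⟨ψ, hψ⟩ := hBc.exists_dual_pos hBcl hBpt
  refine ⟨fun a b ha hb => ha.tmul hb hAc hBc hφ hψ, fun z hz => ?_⟩
  obtain ⟨a, ha, b, hb, rfl⟩ := hz.exists_eq_tmul hAsmul
  have ha0 : a ≠ 0 := by rintro rfl; exact hz.1 (zero_tmul _ _)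
  have hb0 : b ≠ 0 := by rintro rfl; exact hz.1 (tmul_zero _ _)
  exact ⟨a, b,
    hz.of_map hAsmul (mk_flip_injective_of_ne_zero hb0) (fun x hx => tmul_mem_tensorCone hx hb) ha,
    hz.of_map hBsmul (mk_injective_of_ne_zero ha0) (fun y hy => tmul_mem_tensorCone ha hy) hb, rfl⟩
end

section
/- Let A ⊆ V_A and B ⊆ V_B be almost compact cones in finite-dimensional real vector spaces and let F_A and F_B be faces of A and B respectively. Then the cone F_A ⊗ F_B, consisting of all finite sums ∑ᵢ aᵢ ⊗ bᵢ with aᵢ ∈ F_A and bᵢ ∈ F_B, is a face of A ⊗ B. If moreover F_A and F_B are exposed faces of A and B, then F_A ⊗ F_B is an exposed face of A ⊗ B. -/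
open scoped TensorProduct

/-- `F` is an exposed face of the convex cone `C`: there is a linear functional `φ`,
nonnegative on `C`, with `F = C ∩ ker φ`. -/
def IsExposedConeFace {V : Type*} [AddCommGroup V] [Module ℝ V] (C F : Set V) : Prop :=
  ∃ φ : V →ₗ[ℝ] ℝ, (∀ x ∈ C, 0 ≤ φ x) ∧ F = C ∩ {x | φ x = 0}

/-!
Fix linear functionals `e_A`, `e_B` that are strictly positive on `A ∖ 0` and `B ∖ 0`; they
exist because a closed pointed cone in finite dimension is separated from every `-x`, and a finite
spanning family of the dual cone then sums to a strictly positive functional. If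
`a ⊗ b + z ∈ F_A ⊗ F_B` with `a ∈ A`, `b ∈ B`, `z ∈ A ⊗ B`, contracting the second factor with
`e_B` gives `e_B(b) a + (a point of A) ∈ F_A`, so `a ∈ F_A`; symmetrically `b ∈ F_B`. As `A ⊗ B`
is generated by such `a ⊗ b`, this makes `F_A ⊗ F_B` a face. If `F_A = A ∩ ker φ` and
`F_B = B ∩ ker ψ`, the functional `φ ⊗ e_B + e_A ⊗ ψ` is nonnegative on `A ⊗ B` and vanishes on
`a ⊗ b` exactly when `a ⊗ b ∈ F_A ⊗ F_B`, so it exposes `F_A ⊗ F_B`.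
-/

open TensorProduct Module

theorem apply_nonneg_of_forall_ne_zero {R M : Type*} [Semiring R] [PartialOrder R]
    [AddCommMonoid M] [Module R M] {s : Set M} {e : M →ₗ[R] R}
    (he : ∀ x ∈ s, x ≠ 0 → 0 < e x) : ∀ x ∈ s, 0 ≤ e x := fun x hx =>
  (eq_or_ne x 0).elim (fun h => by simp [h]) fun h => (he x hx h).le

namespace PointedCone

section LinearOrderedField

variable {R M : Type*} [Field R] [LinearOrder R] [IsStrictOrderedRing R]
  [AddCommGroup M] [Module R M]

theorem IsFaceOf.of_hull {s : Set M} {F : PointedCone R M} (hF : F ≤ hull R s)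
    (h : ∀ x ∈ s, ∀ y ∈ hull R s, x + y ∈ F → x ∈ F) : F.IsFaceOf (hull R s) := by
  refine IsFaceOf.of_mem_of_add_mem_left hF fun {x y} hx hy hxy => ?_
  induction hx using Submodule.span_induction generalizing y with
  | mem x hx => exact h x hx y hy hxy
  | zero => exact F.zero_mem
  | add x₁ x₂ hx₁ hx₂ ih₁ ih₂ =>
    refine add_mem (ih₁ (add_mem hx₂ hy) ?_) (ih₂ (add_mem hx₁ hy) ?_)
    · rwa [← add_assoc]
    · rwa [add_left_comm, ← add_assoc]
  | smul c x hx ih =>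
    rcases eq_or_ne c 0 with rfl | hc
    · simp
    have : x + c⁻¹ • y ∈ F := by
      simpa [smul_add, smul_smul, inv_mul_cancel₀ hc] using Submodule.smul_mem F c⁻¹ hxy
    exact Submodule.smul_mem F c (ih (Submodule.smul_mem _ _ hy) this)

theorem apply_nonneg_of_mem_hull {s : Set M} {Φ : M →ₗ[R] R} (hpos : ∀ x ∈ s, 0 ≤ Φ x)
    {z : M} (hz : z ∈ hull R s) : 0 ≤ Φ z := by
  induction hz using Submodule.span_induction with
  | mem x hx => exact hpos x hx
  | zero => simp
  | add x y _ _ hx hy => simpa using add_nonneg hx hy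
  | smul c x _ hx => simpa [Nonneg.mk_smul, ← Nonneg.coe_smul] using mul_nonneg c.2 hx

theorem mem_of_mem_hull_of_apply_eq_zero {s : Set M} {F : PointedCone R M} {Φ : M →ₗ[R] R}
    (hpos : ∀ x ∈ s, 0 ≤ Φ x) (hker : ∀ x ∈ s, Φ x = 0 → x ∈ F) {z : M} (hz : z ∈ hull R s)
    (hΦz : Φ z = 0) : z ∈ F := by
  induction hz using Submodule.span_induction with
  | mem x hx => exact hker x hx hΦz
  | zero => exact F.zero_mem
  | add x y hx hy ihx ihy =>
    rw [map_add] at hΦz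
    have hΦx := apply_nonneg_of_mem_hull hpos hx
    have hΦy := apply_nonneg_of_mem_hull hpos hy
    exact add_mem (ihx (by linarith)) (ihy (by linarith))
  | smul c x _ ih =>
    rcases eq_or_ne c 0 with rfl | hc
    · simp
    refine Submodule.smul_mem F c (ih ?_)
    simpa [Nonneg.coe_smul, hc] using hΦz

variable {G H : Type*} [AddCommGroup G] [Module R G] [AddCommGroup H] [Module R H]

theorem minTensorProduct_hull_hull (s : Set G) (t : Set H) :
    minTensorProduct (hull R s) (hull R t) = hull R (Set.image2 (· ⊗ₜ[R] ·) s t) :=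
  let f := (TensorProduct.mk R G H).restrictScalars₁₂ {c : R // 0 ≤ c} {c : R // 0 ≤ c}
  (Submodule.map₂_eq_span_image2 f _ _).symm.trans (Submodule.map₂_span_span _ f s t)

theorem rid_lTensor_mem_of_mem_minTensorProduct {K : PointedCone R G} {L : PointedCone R H}
    {e : H →ₗ[R] R} (he : ∀ y ∈ L, 0 ≤ e y) {w : G ⊗[R] H} (hw : w ∈ minTensorProduct K L) :
    TensorProduct.rid R G (e.lTensor G w) ∈ K := by
  induction hw using Submodule.span_induction with
  | mem w hw =>
    obtain ⟨a, ha, b, hb, rfl⟩ := hw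
    simpa using K.smul_mem (he b hb) ha
  | zero => simp
  | add w₁ w₂ _ _ h₁ h₂ => simpa using add_mem h₁ h₂
  | smul c w _ h => simpa [← Nonneg.coe_smul] using Submodule.smul_mem K c h

variable {C₁ F₁ : PointedCone R G} {C₂ F₂ : PointedCone R H}

theorem IsFaceOf.mem_left_of_tmul_add_mem_minTensorProduct (h₁ : F₁.IsFaceOf C₁)
    (hF₂ : F₂ ≤ C₂) {e : H →ₗ[R] R} (he : ∀ y ∈ C₂, 0 ≤ e y) {a : G} {b : H}
    {z : G ⊗[R] H} (ha : a ∈ C₁) (hb : 0 < e b) (hz : z ∈ minTensorProduct C₁ C₂)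
    (h : a ⊗ₜ b + z ∈ minTensorProduct F₁ F₂) : a ∈ F₁ := by
  have := rid_lTensor_mem_of_mem_minTensorProduct (fun y hy => he y (hF₂ hy)) h
  rw [map_add, map_add] at this
  exact h₁.mem_of_smul_add_mem ha (rid_lTensor_mem_of_mem_minTensorProduct he hz) hb
    (by simpa using this)

theorem IsFaceOf.mem_right_of_tmul_add_mem_minTensorProduct (h₂ : F₂.IsFaceOf C₂)
    (hF₁ : F₁ ≤ C₁) {e : G →ₗ[R] R} (he : ∀ x ∈ C₁, 0 ≤ e x) {a : G} {b : H}
    {z : G ⊗[R] H} (ha : 0 < e a) (hb : b ∈ C₂) (hz : z ∈ minTensorProduct C₁ C₂)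
    (h : a ⊗ₜ b + z ∈ minTensorProduct F₁ F₂) : b ∈ F₂ := by
  refine h₂.mem_left_of_tmul_add_mem_minTensorProduct hF₁ he hb ha
    (z := TensorProduct.comm R G H z) ?_ ?_
  · rw [← minTensorProduct_comm]
    exact mem_map.2 ⟨z, hz, rfl⟩
  · rw [← minTensorProduct_comm]
    exact mem_map.2 ⟨_, h, by simp⟩

theorem IsFaceOf.minTensorProduct (h₁ : F₁.IsFaceOf C₁) (h₂ : F₂.IsFaceOf C₂)
    {e₁ : G →ₗ[R] R} {e₂ : H →ₗ[R] R} (he₁ : ∀ x ∈ C₁, x ≠ 0 → 0 < e₁ x)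
    (he₂ : ∀ y ∈ C₂, y ≠ 0 → 0 < e₂ y) :
    (minTensorProduct F₁ F₂).IsFaceOf (minTensorProduct C₁ C₂) := by
  refine IsFaceOf.of_hull (minTensorProduct_mono h₁.le h₂.le) ?_
  rintro _ ⟨a, ha, b, hb, rfl⟩ z hz h
  rcases eq_or_ne a 0 with rfl | ha0
  · simp
  rcases eq_or_ne b 0 with rfl | hb0
  · simp
  exact tmul_mem_minTensorProduct
    (h₁.mem_left_of_tmul_add_mem_minTensorProduct h₂.le (apply_nonneg_of_forall_ne_zero he₂) ha
      (he₂ b hb hb0) hz h)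
    (h₂.mem_right_of_tmul_add_mem_minTensorProduct h₁.le (apply_nonneg_of_forall_ne_zero he₁)
      (he₁ a ha ha0) hb hz h)

end LinearOrderedField

theorem exists_forall_pos_of_isClosed_of_salient {E : Type*} [AddCommGroup E]
    [TopologicalSpace E] [IsTopologicalAddGroup E] [Module ℝ E] [ContinuousSMul ℝ E]
    [LocallyConvexSpace ℝ E] [FiniteDimensional ℝ E] {C : PointedCone ℝ E}
    (hC : IsClosed (C : Set E)) (hs : (C : ConvexCone ℝ E).Salient) :
    ∃ e : E →ₗ[ℝ] ℝ, ∀ x ∈ C, x ≠ 0 → 0 < e x := by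
  set D : Set (Module.Dual ℝ E) := {f | ∀ x ∈ C, 0 ≤ f x}
  have hsep : ∀ x ∈ C, x ≠ 0 → ∃ f ∈ D, 0 < f x := by
    intro x hx hx0
    obtain ⟨f, hfC, hfx⟩ := ProperCone.hyperplane_separation_point ⟨C, hC⟩ (hs x hx hx0)
    exact ⟨f, hfC, by simpa using hfx⟩
  obtain ⟨T, hTD, hTspan, hTli⟩ := exists_linearIndependent ℝ D
  have hT : T.Finite := hTli.setFinite
  refine ⟨∑ f ∈ hT.toFinset, f, fun x hx hx0 => ?_⟩
  obtain ⟨g, hgD, hgx⟩ := hsep x hx hx0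
  obtain ⟨f, hfT, hfx⟩ : ∃ f ∈ T, f x ≠ 0 := by
    by_contra! h
    have hker : Submodule.span ℝ D ≤ LinearMap.ker (Module.Dual.eval ℝ E x) :=
      hTspan ▸ Submodule.span_le.2 h
    exact hgx.ne' (hker (Submodule.subset_span hgD))
  rw [LinearMap.sum_apply]
  exact Finset.sum_pos' (fun f hf => hTD (hT.mem_toFinset.1 hf) x hx)
    ⟨f, hT.mem_toFinset.2 hfT, (hTD hfT x hx).lt_of_ne' hfx⟩

variable {G H : Type*} [AddCommGroup G] [Module ℝ G] [AddCommGroup H] [Module ℝ H]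

theorem IsFaceOf.isConeFace {C F : PointedCone ℝ G} (h : F.IsFaceOf C) :
    IsConeFace (C : Set G) F :=
  ⟨h.le, fun _ hx _ hy => F.add_mem hx hy, fun _ hc _ hx => F.smul_mem hc hx,
    fun _ hx _ hy hxy => (h.add_mem_iff_mem hx hy).1 hxy⟩

theorem isExposedConeFace_minTensorProduct {C₁ F₁ : PointedCone ℝ G} {C₂ F₂ : PointedCone ℝ H}
    (h₁ : IsExposedConeFace (C₁ : Set G) F₁) (h₂ : IsExposedConeFace (C₂ : Set H) F₂)
    {e₁ : G →ₗ[ℝ] ℝ} {e₂ : H →ₗ[ℝ] ℝ}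
    (he₁ : ∀ x ∈ C₁, x ≠ 0 → 0 < e₁ x) (he₂ : ∀ y ∈ C₂, y ≠ 0 → 0 < e₂ y) :
    IsExposedConeFace (minTensorProduct C₁ C₂ : Set (G ⊗[ℝ] H)) (minTensorProduct F₁ F₂) := by
  obtain ⟨φ, hφ, hF₁⟩ := h₁
  obtain ⟨ψ, hψ, hF₂⟩ := h₂
  have he₁' := apply_nonneg_of_forall_ne_zero he₁
  have he₂' := apply_nonneg_of_forall_ne_zero he₂
  set Φ := dualDistrib ℝ G H (φ ⊗ₜ e₂ + e₁ ⊗ₜ ψ)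
  have hΦ (a : G) (b : H) : Φ (a ⊗ₜ b) = φ a * e₂ b + e₁ a * ψ b := by
    simp [Φ, dualDistrib_apply]
  have hpos : ∀ t ∈ Set.image2 (· ⊗ₜ[ℝ] ·) (C₁ : Set G) (C₂ : Set H), 0 ≤ Φ t := by
    rintro _ ⟨a, ha, b, hb, rfl⟩
    rw [hΦ]
    exact add_nonneg (mul_nonneg (hφ a ha) (he₂' b hb)) (mul_nonneg (he₁' a ha) (hψ b hb))
  refine ⟨Φ, fun z hz => apply_nonneg_of_mem_hull hpos hz, Set.Subset.antisymm ?_ ?_⟩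
  · have hker : minTensorProduct F₁ F₂ ≤ (LinearMap.ker Φ).restrictScalars _ := by
      refine Submodule.span_le.2 ?_
      rintro _ ⟨a, ha, b, hb, rfl⟩
      rw [hF₁] at ha
      rw [hF₂] at hb
      obtain ⟨-, hφa : φ a = 0⟩ := ha
      obtain ⟨-, hψb : ψ b = 0⟩ := hb
      simp [hΦ, hφa, hψb]
    intro z hz
    exact ⟨minTensorProduct_mono (fun x hx => (hF₁.le hx).1) (fun y hy => (hF₂.le hy).1) hz,
      hker hz⟩
  · rintro z ⟨hz, hΦz⟩
    refine mem_of_mem_hull_of_apply_eq_zero hpos ?_ hz hΦz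
    rintro _ ⟨a, ha, b, hb, rfl⟩ h0
    rcases eq_or_ne a 0 with rfl | ha0
    · simp
    rcases eq_or_ne b 0 with rfl | hb0
    · simp
    rw [hΦ] at h0
    have h₁ := mul_nonneg (hφ a ha) (he₂' b hb)
    have h₂ := mul_nonneg (he₁' a ha) (hψ b hb)
    have hφa : φ a = 0 :=
      (mul_eq_zero.1 (by linarith : φ a * e₂ b = 0)).resolve_right (he₂ b hb hb0).ne'
    have hψb : ψ b = 0 :=
      (mul_eq_zero.1 (by linarith : e₁ a * ψ b = 0)).resolve_left (he₁ a ha ha0).ne'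
    exact tmul_mem_minTensorProduct (hF₁ ▸ ⟨ha, hφa⟩ : a ∈ (F₁ : Set G))
      (hF₂ ▸ ⟨hb, hψb⟩ : b ∈ (F₂ : Set H))

end PointedCone

open PointedCone

section ConeSets

variable {V : Type*} [AddCommGroup V] [Module ℝ V] {C F : Set V}

theorem coe_hull_of_add_mem_of_smul_mem (hadd : ∀ x ∈ C, ∀ y ∈ C, x + y ∈ C)
    (hsmul : ∀ c : ℝ, 0 ≤ c → ∀ x ∈ C, c • x ∈ C) : (hull ℝ C : Set V) = insert 0 C := by
  refine Set.Subset.antisymm (fun z hz => ?_) (Set.insert_subset (zero_mem _) subset_hull)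
  induction hz using Submodule.span_induction with
  | mem x hx => exact Or.inr hx
  | zero => exact Or.inl rfl
  | add x y _ _ hx hy =>
    rcases hx with rfl | hx
    · simpa using hy
    rcases hy with rfl | hy
    · simpa using Or.inr hx
    exact Or.inr (hadd x hx y hy)
  | smul c x _ hx =>
    rcases hx with rfl | hx
    · simp
    exact Or.inr (hsmul c c.2 x hx)

-- `F` may be empty; `hull ℝ F = insert 0 F` is still a face because `C` is pointed.
theorem IsConeFace.isFaceOf_hull (hadd : ∀ x ∈ C, ∀ y ∈ C, x + y ∈ C)
    (hsmul : ∀ c : ℝ, 0 ≤ c → ∀ x ∈ C, c • x ∈ C) (hpt : C ∩ -C = {0})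
    (hF : IsConeFace C F) : (hull ℝ F).IsFaceOf (hull ℝ C) := by
  refine IsFaceOf.of_mem_of_add_mem_left (Submodule.span_mono hF.1) fun {x y} hx hy hxy => ?_
  rw [← SetLike.mem_coe, coe_hull_of_add_mem_of_smul_mem hadd hsmul] at hx hy
  rw [← SetLike.mem_coe, coe_hull_of_add_mem_of_smul_mem hF.2.1 hF.2.2.1] at hxy ⊢
  rcases hx with rfl | hx
  · exact Or.inl rfl
  rcases hy with rfl | hy
  · simpa using hxy
  rcases hxy with hxy | hxy
  · have : x ∈ C ∩ -C := ⟨hx, by simpa [neg_eq_of_add_eq_zero_right hxy] using hy⟩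
    exact Or.inl (by simpa [hpt] using this)
  · exact Or.inr (hF.2.2.2 x hx y hy hxy).1

theorem IsExposedConeFace.coe_hull (hexp : IsExposedConeFace C F) (hF : IsConeFace C F)
    (h0 : (0 : V) ∈ C) : (hull ℝ F : Set V) = F := by
  obtain ⟨φ, -, hφ⟩ := hexp
  rw [coe_hull_of_add_mem_of_smul_mem hF.2.1 hF.2.2.1,
    Set.insert_eq_of_mem (hφ ▸ ⟨h0, map_zero φ⟩)]

theorem tensorCone_eq_minTensorProduct_hull {W : Type*} [AddCommGroup W] [Module ℝ W]
    (hsmul : ∀ c : ℝ, 0 ≤ c → ∀ x ∈ C, c • x ∈ C) (D : Set W) :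
    tensorCone C D = minTensorProduct (hull ℝ C) (hull ℝ D) := by
  rw [minTensorProduct_hull_hull]
  refine Set.Subset.antisymm ?_ fun z hz => ?_
  · rintro _ ⟨k, a, b, ha, hb, rfl⟩
    exact Submodule.sum_mem _ fun j _ => subset_hull (Set.mem_image2_of_mem (ha j) (hb j))
  · obtain ⟨n, c, g, rfl⟩ := Submodule.mem_span_set'.1 hz
    choose a ha b hb hab using fun i => (g i).2
    refine ⟨n, fun i => (c i : ℝ) • a i, b, fun i => hsmul _ (c i).2 _ (ha i), hb, ?_⟩
    simp only [← hab]
    exact Finset.sum_congr rfl fun i _ => by rw [← Nonneg.coe_smul, TensorProduct.smul_tmul']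

end ConeSets

section AlmostCompactCone

variable {V : Type*} [NormedAddCommGroup V] [NormedSpace ℝ V] {C : Set V}

theorem IsACCone.zero_mem (hC : IsACCone C) : (0 : V) ∈ C := by
  obtain ⟨-, -, -, hpt, -⟩ := hC
  exact (hpt.ge rfl).1

theorem IsACCone.coe_hull (hC : IsACCone C) : (hull ℝ C : Set V) = C := by
  rw [coe_hull_of_add_mem_of_smul_mem hC.1 hC.2.1, Set.insert_eq_of_mem hC.zero_mem]

theorem IsACCone.exists_forall_pos [FiniteDimensional ℝ V] (hC : IsACCone C) :
    ∃ e : V →ₗ[ℝ] ℝ, ∀ x ∈ C, x ≠ 0 → 0 < e x := by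
  have hcoe := hC.coe_hull
  obtain ⟨-, -, hcl, hpt, -⟩ := hC
  rw [← hcoe] at hcl hpt ⊢
  exact exists_forall_pos_of_isClosed_of_salient hcl
    ((salient_iff_inter_neg_eq_singleton _).2 hpt)

end AlmostCompactCone

/-- If `F_A` and `F_B` are faces of the almost compact cones `A` and `B` then `F_A ⊗ F_B`
is a face of `A ⊗ B`; if moreover `F_A` and `F_B` are exposed, so is `F_A ⊗ F_B`. -/
theorem tensor_of_faces_is_face {VA VB : Type*}
    [NormedAddCommGroup VA] [NormedSpace ℝ VA] [FiniteDimensional ℝ VA]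
    [NormedAddCommGroup VB] [NormedSpace ℝ VB] [FiniteDimensional ℝ VB]
    (A : Set VA) (B : Set VB) (hA : IsACCone A) (hB : IsACCone B)
    (FA : Set VA) (FB : Set VB) (hFA : IsConeFace A FA) (hFB : IsConeFace B FB) :
    IsConeFace (tensorCone A B) (tensorCone FA FB) ∧
    (IsExposedConeFace A FA → IsExposedConeFace B FB →
      IsExposedConeFace (tensorCone A B) (tensorCone FA FB)) := by
  have ⟨hAadd, hAsmul, _, hApt, _⟩ := hA
  have ⟨hBadd, hBsmul, _, hBpt, _⟩ := hB
  obtain ⟨eA, heA⟩ := hA.exists_forall_pos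
  obtain ⟨eB, heB⟩ := hB.exists_forall_pos
  rw [← hA.coe_hull] at heA
  rw [← hB.coe_hull] at heB
  rw [tensorCone_eq_minTensorProduct_hull hAsmul, tensorCone_eq_minTensorProduct_hull hFA.2.2.1]
  constructor
  · exact ((hFA.isFaceOf_hull hAadd hAsmul hApt).minTensorProduct
      (hFB.isFaceOf_hull hBadd hBsmul hBpt) heA heB).isConeFace
  · intro hexpA hexpB
    refine isExposedConeFace_minTensorProduct ?_ ?_ heA heB
    · rwa [hA.coe_hull, hexpA.coe_hull hFA hA.zero_mem]
    · rwa [hB.coe_hull, hexpB.coe_hull hFB hB.zero_mem]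
end

section
/- Let B ⊆ ℝⁿ be a compact set, let m be a finite Borel measure on ℝⁿ whose support equals B (every open set meeting B has positive m-measure), and let T : ℝⁿ → ℝ^M be a polynomial map with components T₁,…,T_M. For an integer k ≥ 0 let Q_k = {λ ∈ ℝ^M : for every real polynomial a in n variables of total degree at most k, ∫_B (1 + ∑ᵢ λᵢTᵢ(x))·a(x)² dm(x) ≥ 0}. Then ⋂_{k≥0} Q_k = {λ ∈ ℝ^M : 1 + ∑ᵢ λᵢTᵢ(x) ≥ 0 for all x ∈ B}; in particular, {λ : 1 + ∑ᵢ λᵢTᵢ(x) ≥ 0 on B} ⊆ Q_k for every k. -/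
/-!
If `f = 1 + ∑ᵢ lᵢ Tᵢ` is negative at a point of `B`, then `g = √(max (-f) 0)` is continuous and
`∫_B f g² = -∫_B (max (-f) 0)² < 0`, because `B` is the support of `m`. By Stone–Weierstrass
`g` is a uniform limit of polynomials `a` on the compact set `B`, and by dominated convergence
`∫_B f a² < 0` for one of them, so `l ∉ Q_k` for `k = deg a`. The other inclusion is immediate
since the integrand `f a²` is nonnegative on `B`.
-/

open MeasureTheory MvPolynomial

/-- The `k`-th relaxation `Q_k`: those `l ∈ ℝ^M` for which the bilinear form
`(a,b) ↦ ∫_B (1 + ∑ᵢ lᵢ Tᵢ(x)) a(x) b(x) dm(x)` is positive semidefinite on polynomials of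
degree at most `k`, i.e. `∫_B (1 + ∑ᵢ lᵢ Tᵢ(x)) a(x)² dm(x) ≥ 0` for all such `a`. -/
def Qset {n M : ℕ} (B : Set (Fin n → ℝ)) (μ : Measure (Fin n → ℝ))
    (T : Fin M → MvPolynomial (Fin n) ℝ) (k : ℕ) : Set (Fin M → ℝ) :=
  {l | ∀ a : MvPolynomial (Fin n) ℝ, a.totalDegree ≤ k →
    0 ≤ ∫ x in B, (1 + ∑ i, l i * eval x (T i)) * (eval x a) ^ 2 ∂μ}

open Filter Topology

section StoneWeierstrass

variable {σ : Type*}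

noncomputable def mvPolynomialFunctions (σ : Type*) : Subalgebra ℝ C(σ → ℝ, ℝ) :=
  (aeval fun i => ContinuousMap.eval i : MvPolynomial σ ℝ →ₐ[ℝ] C(σ → ℝ, ℝ)).range

theorem aeval_continuousMap_eval_apply (p : MvPolynomial σ ℝ) (x : σ → ℝ) :
    aeval (fun i => ContinuousMap.eval i) p x = eval x p := by
  induction p using MvPolynomial.induction_on with
  | C a => simp
  | add p q hp hq => simp [hp, hq]
  | mul_X p i hp => simp [hp]

theorem mvPolynomialFunctions_separatesPoints : (mvPolynomialFunctions σ).SeparatesPoints := by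
  intro x y hxy
  obtain ⟨i, hi⟩ := Function.ne_iff.1 hxy
  exact ⟨_, ⟨_, ⟨X i, rfl⟩, rfl⟩, by simpa using hi⟩

theorem exists_mvPolynomial_near_continuous_of_isCompact {K : Set (σ → ℝ)} (hK : IsCompact K)
    {g : (σ → ℝ) → ℝ} (hg : Continuous g) {ε : ℝ} (hε : 0 < ε) :
    ∃ p : MvPolynomial σ ℝ, ∀ x ∈ K, |eval x p - g x| < ε := by
  obtain ⟨_, ⟨p, rfl⟩, hp⟩ :=
    ContinuousMap.exists_mem_subalgebra_near_continuous_of_isCompact_of_separatesPoints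
      mvPolynomialFunctions_separatesPoints ⟨g, hg⟩ hK hε
  exact ⟨p, fun x hx => by simpa [aeval_continuousMap_eval_apply] using hp x hx⟩

end StoneWeierstrass

section Support

variable {X : Type*} [TopologicalSpace X] [MeasurableSpace X] {μ : Measure X} {K : Set X}

theorem Continuous.setIntegral_pos_of_pos (hK : MeasurableSet K) (hμK : μ Kᶜ = 0)
    (hsupp : ∀ U : Set X, IsOpen U → (U ∩ K).Nonempty → 0 < μ U)
    {h : X → ℝ} (hh : Continuous h) (hint : IntegrableOn h K μ) (hnn : ∀ x ∈ K, 0 ≤ h x)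
    {x₀ : X} (hx₀ : x₀ ∈ K) (hpos : 0 < h x₀) : 0 < ∫ x in K, h x ∂μ := by
  rw [setIntegral_pos_iff_support_of_nonneg_ae (ae_restrict_of_forall_mem hK hnn) hint,
    measure_inter_conull hμK]
  exact hsupp _ hh.isOpen_support ⟨x₀, hpos.ne', hx₀⟩

theorem Continuous.setIntegral_mul_sqrt_neg_sq_neg [OpensMeasurableSpace X] [T2Space X]
    [IsFiniteMeasureOnCompacts μ] (hK : IsCompact K) (hμK : μ Kᶜ = 0)
    (hsupp : ∀ U : Set X, IsOpen U → (U ∩ K).Nonempty → 0 < μ U)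
    {f : X → ℝ} (hf : Continuous f) {x₀ : X} (hx₀ : x₀ ∈ K) (hfx₀ : f x₀ < 0) :
    ∫ x in K, f x * √(-f x) ^ 2 ∂μ < 0 := by
  have hcont : Continuous fun x => -(f x * √(-f x) ^ 2) := by fun_prop
  -- `√(-f x) = 0` wherever `f x ≥ 0`, so the integrand is `-(max (-f) 0)²`.
  have hnn : ∀ x, 0 ≤ -(f x * √(-f x) ^ 2) := by
    intro x
    rcases le_or_gt 0 (f x) with hx | hx
    · simp [Real.sqrt_eq_zero'.2 (neg_nonpos.2 hx)]
    · rw [Real.sq_sqrt (by linarith)]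
      nlinarith
  have hpos : 0 < -(f x₀ * √(-f x₀) ^ 2) := by
    rw [Real.sq_sqrt (by linarith)]
    nlinarith
  have := hcont.setIntegral_pos_of_pos hK.measurableSet hμK hsupp
    (hcont.continuousOn.integrableOn_compact hK) (fun x _ => hnn x) hx₀ hpos
  rw [integral_neg] at this
  linarith

end Support

theorem exists_mvPolynomial_setIntegral_mul_sq_lt {σ : Type*} [Finite σ] {K : Set (σ → ℝ)}
    (hK : IsCompact K) (μ : Measure (σ → ℝ)) [IsFiniteMeasureOnCompacts μ]
    {f g : (σ → ℝ) → ℝ} (hf : Continuous f) (hg : Continuous g) {c : ℝ}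
    (hc : ∫ x in K, f x * g x ^ 2 ∂μ < c) :
    ∃ a : MvPolynomial σ ℝ, ∫ x in K, f x * eval x a ^ 2 ∂μ < c := by
  have : Fact (μ K < ⊤) := ⟨hK.measure_lt_top⟩
  choose a ha using fun j : ℕ =>
    exists_mvPolynomial_near_continuous_of_isCompact hK hg (Nat.one_div_pos_of_nat (n := j))
  obtain ⟨Cf, hCf⟩ := hK.exists_bound_of_continuousOn hf.continuousOn
  obtain ⟨Cg, hCg⟩ := hK.exists_bound_of_continuousOn hg.continuousOn
  have hbound : ∀ j, ∀ x ∈ K, ‖f x * eval x (a j) ^ 2‖ ≤ Cf * (Cg + 1) ^ 2 := by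
    intro j x hx
    have hclose : |eval x (a j) - g x| ≤ 1 :=
      (ha j x hx).le.trans (by rw [div_le_one (by positivity)]; simp)
    have hgx : |g x| ≤ Cg := hCg x hx
    have hax : |eval x (a j)| ≤ Cg + 1 := by
      linarith [abs_sub_abs_le_abs_sub (eval x (a j)) (g x)]
    rw [norm_mul, norm_pow, Real.norm_eq_abs]
    exact mul_le_mul (hCf x hx) (pow_le_pow_left₀ (abs_nonneg _) hax 2) (by positivity)
      ((norm_nonneg _).trans (hCf x hx))
  have hlim : ∀ x ∈ K, Tendsto (fun j => eval x (a j)) atTop (𝓝 (g x)) := fun x hx =>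
    tendsto_iff_dist_tendsto_zero.2 <| squeeze_zero (fun _ => dist_nonneg)
      (fun j => (ha j x hx).le) tendsto_one_div_add_atTop_nhds_zero_nat
  have hconv : Tendsto (fun j => ∫ x in K, f x * eval x (a j) ^ 2 ∂μ) atTop
      (𝓝 (∫ x in K, f x * g x ^ 2 ∂μ)) :=
    tendsto_integral_filter_of_norm_le_const
      (Eventually.of_forall fun j =>
        (hf.mul ((continuous_eval _).pow 2)).aestronglyMeasurable)
      ⟨_, Eventually.of_forall fun j => ae_restrict_of_forall_mem hK.measurableSet (hbound j)⟩
      (ae_restrict_of_forall_mem hK.measurableSet fun x hx =>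
        ((hlim x hx).pow 2).const_mul (f x))
  obtain ⟨j, hj⟩ := (hconv.eventually (gt_mem_nhds hc)).exists
  exact ⟨a j, hj⟩

/-- Let `B ⊆ ℝⁿ` be compact, `m` a finite Borel measure supported exactly on `B`, and
`T : ℝⁿ → ℝ^M` a polynomial map.  Then `⋂ₖ Q_k` equals the set of `l` with
`1 + ∑ᵢ lᵢ Tᵢ ≥ 0` on `B` (the polar of the convex hull of `T(B)`); in particular the
latter set is contained in every `Q_k`. -/
theorem relaxation_intersection_eq_polar {n M : ℕ}
    (B : Set (Fin n → ℝ)) (hB : IsCompact B)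
    (μ : Measure (Fin n → ℝ)) [IsFiniteMeasure μ]
    (hμB : μ Bᶜ = 0)
    (hsupp : ∀ U : Set (Fin n → ℝ), IsOpen U → (U ∩ B).Nonempty → 0 < μ U)
    (T : Fin M → MvPolynomial (Fin n) ℝ) :
    (⋂ k : ℕ, Qset B μ T k) =
      {l : Fin M → ℝ | ∀ x ∈ B, 0 ≤ 1 + ∑ i, l i * eval x (T i)} ∧
    ∀ k : ℕ, {l : Fin M → ℝ | ∀ x ∈ B, 0 ≤ 1 + ∑ i, l i * eval x (T i)} ⊆ Qset B μ T k := by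
  have polar_subset : ∀ k : ℕ, {l : Fin M → ℝ | ∀ x ∈ B, 0 ≤ 1 + ∑ i, l i * eval x (T i)}
      ⊆ Qset B μ T k := fun k l hl a _ =>
    setIntegral_nonneg hB.measurableSet fun x hx => mul_nonneg (hl x hx) (sq_nonneg _)
  refine ⟨(Set.subset_iInter polar_subset).antisymm' ?_, polar_subset⟩
  intro l hl x₀ hx₀
  by_contra! hneg
  have hf : Continuous fun x => 1 + ∑ i, l i * eval x (T i) :=
    continuous_const.add <| continuous_finsetSum _ fun i _ =>
      continuous_const.mul (continuous_eval (T i))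
  obtain ⟨a, ha⟩ := exists_mvPolynomial_setIntegral_mul_sq_lt hB μ hf hf.neg.sqrt
    (hf.setIntegral_mul_sqrt_neg_sq_neg hB hμB hsupp hx₀ hneg)
  exact ha.not_ge (Set.mem_iInter.1 hl a.totalDegree a le_rfl)
end

section
/- Let B ⊆ ℝⁿ be a nonempty finite set, let m be the counting measure on B, and let T : ℝⁿ → ℝ^M be a polynomial map with components T₁,…,T_M such that 0 lies in the convex hull of T(B). For an integer k ≥ 0 let Q_k = {λ ∈ ℝ^M : for every real polynomial a in n variables of total degree at most k, ∑_{x∈B} (1 + ∑ᵢ λᵢTᵢ(x))·a(x)² ≥ 0}, and let Q_k° = {y ∈ ℝ^M : ⟨λ, y⟩ ≥ −1 for all λ ∈ Q_k}. Then there exists an integer k such that the convex hull of T(B) equals Q_k°. -/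
/-!
Once `k ≥ |B|`, every point of `B` has an interpolating polynomial of degree `≤ k` that is
`1` there and vanishes on the rest of `B`. Testing with these shows that `Q_k` is exactly the
set of `λ` with `1 + ⟨λ, T(x)⟩ ≥ 0` for all `x ∈ B`, i.e. the polar of `T(B)`, so the theorem
is the bipolar theorem for the polytope `conv T(B)`, which contains `0`.
-/

open MvPolynomial

/-- The polar of a subset `S ⊆ ℝ^M`: all `y` with `⟨s, y⟩ ≥ −1` for every `s ∈ S`. -/
def polarSet {M : ℕ} (S : Set (Fin M → ℝ)) : Set (Fin M → ℝ) :=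
  {y | ∀ l ∈ S, -1 ≤ ∑ i, l i * y i}

open Matrix Finset

lemma mem_polarSet_iff {M : ℕ} {S : Set (Fin M → ℝ)} {y : Fin M → ℝ} :
    y ∈ polarSet S ↔ ∀ l ∈ S, -1 ≤ l ⬝ᵥ y := Iff.rfl

lemma convex_polarSet {M : ℕ} (S : Set (Fin M → ℝ)) : Convex ℝ (polarSet S) := by
  intro y hy z hz a b ha hb hab
  rw [mem_polarSet_iff] at hy hz ⊢
  intro l hl
  rw [dotProduct_add, dotProduct_smul, dotProduct_smul, smul_eq_mul, smul_eq_mul]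
  nlinarith [hy l hl, hz l hl]

lemma subset_polarSet_polarSet {M : ℕ} (S : Set (Fin M → ℝ)) : S ⊆ polarSet (polarSet S) :=
  fun s hs l hl => by
    rw [mem_polarSet_iff] at hl
    exact (dotProduct_comm l s).trans_ge (hl s hs)

lemma convexHull_subset_polarSet_polarSet {M : ℕ} (S : Set (Fin M → ℝ)) :
    convexHull ℝ S ⊆ polarSet (polarSet S) :=
  convexHull_min (subset_polarSet_polarSet S) (convex_polarSet _)

lemma polarSet_polarSet_subset_convexHull {M : ℕ} {S : Set (Fin M → ℝ)} (hS : S.Finite)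
    (h0 : 0 ∈ convexHull ℝ S) : polarSet (polarSet S) ⊆ convexHull ℝ S := by
  intro y hy
  by_contra hyS
  obtain ⟨f, u, hf, hfy⟩ := geometric_hahn_banach_closed_point (convex_convexHull ℝ S)
    (hS.isCompact_convexHull (𝕜 := ℝ)).isClosed hyS
  have hu : 0 < u := by simpa using hf 0 h0
  set l := -u⁻¹ • (dotProductEquiv ℝ (Fin M)).symm f.toLinearMap
  have hl : ∀ z, l ⬝ᵥ z = -(f z / u) := fun z => by
    have := congrArg (· z) ((dotProductEquiv ℝ (Fin M)).apply_symm_apply f.toLinearMap)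
    simp only [dotProductEquiv_apply_apply] at this
    rw [smul_dotProduct, this, smul_eq_mul]
    simp [div_eq_inv_mul]
  have hlS : l ∈ polarSet S := mem_polarSet_iff.2 fun s hs => by
    rw [dotProduct_comm, hl, neg_le_neg_iff, div_le_one hu]
    exact (hf s (subset_convexHull ℝ S hs)).le
  have := mem_polarSet_iff.1 hy l hlS
  rw [hl, neg_le_neg_iff, div_le_one hu] at this
  linarith

theorem convexHull_eq_polarSet_polarSet {M : ℕ} {S : Set (Fin M → ℝ)} (hS : S.Finite)
    (h0 : 0 ∈ convexHull ℝ S) : convexHull ℝ S = polarSet (polarSet S) :=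
  (convexHull_subset_polarSet_polarSet S).antisymm (polarSet_polarSet_subset_convexHull hS h0)

namespace MvPolynomial

variable {σ K : Type*} [Field K]

theorem exists_totalDegree_le_eval_eq_one_eval_eq_zero [DecidableEq (σ → K)]
    (s : Finset (σ → K)) (x₀ : σ → K) :
    ∃ p : MvPolynomial σ K, p.totalDegree ≤ #s ∧ eval x₀ p = 1 ∧
      ∀ y ∈ s, y ≠ x₀ → eval y p = 0 := by
  have hne (y : s.erase x₀) : ∃ i, x₀ i ≠ (y : σ → K) i :=
    Function.ne_iff.mp (Finset.ne_of_mem_erase y.2).symm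
  choose i hi using hne
  -- one affine factor per other point `y`, vanishing at `y` and equal to `1` at `x₀`
  refine ⟨∏ y ∈ (s.erase x₀).attach,
    C (x₀ (i y) - (y : σ → K) (i y))⁻¹ * (X (i y) - C ((y : σ → K) (i y))), ?_, ?_, ?_⟩
  · refine (totalDegree_finsetProd _ _).trans ((sum_le_card_nsmul _ _ 1 fun y _ => ?_).trans ?_)
    · refine (totalDegree_mul _ _).trans ?_
      rw [totalDegree_C, zero_add]
      exact (totalDegree_sub_C_le _ _).trans (totalDegree_X _).le
    · simpa using card_erase_le
  · simp only [map_prod, map_mul, map_sub, eval_C, eval_X]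
    exact prod_eq_one fun y _ => inv_mul_cancel₀ (sub_ne_zero_of_ne (hi y))
  · intro y hy hyx
    simp only [map_prod, map_mul, map_sub, eval_C, eval_X]
    exact prod_eq_zero (mem_attach _ ⟨y, mem_erase.2 ⟨hyx, hy⟩⟩) (by simp)

theorem forall_sum_mul_eval_sq_nonneg_iff [LinearOrder K] [IsStrictOrderedRing K]
    {s : Finset (σ → K)} (w : (σ → K) → K) {k : ℕ} (hk : #s ≤ k) :
    (∀ a : MvPolynomial σ K, a.totalDegree ≤ k → 0 ≤ ∑ x ∈ s, w x * eval x a ^ 2) ↔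
      ∀ x ∈ s, 0 ≤ w x := by
  classical
  refine ⟨fun h x₀ hx₀ => ?_,
    fun h a _ => sum_nonneg fun x hx => mul_nonneg (h x hx) (sq_nonneg _)⟩
  obtain ⟨p, hdeg, hx₀p, hp⟩ := exists_totalDegree_le_eval_eq_one_eval_eq_zero s x₀
  have := h p (hdeg.trans hk)
  rwa [sum_eq_single_of_mem x₀ hx₀ fun y hy hyx => by simp [hp y hy hyx], hx₀p, one_pow,
    mul_one] at this

end MvPolynomial

theorem finite_convergence_of_relaxation_general {n M : ℕ}
    (B : Set (Fin n → ℝ)) (hB : B.Finite)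
    (T : Fin M → MvPolynomial (Fin n) ℝ)
    (h0 : (0 : Fin M → ℝ) ∈ convexHull ℝ ((fun x i => eval x (T i)) '' B)) :
    ∃ k : ℕ, convexHull ℝ ((fun (x : Fin n → ℝ) (i : Fin M) => eval x (T i)) '' B) =
      polarSet {l : Fin M → ℝ | ∀ a : MvPolynomial (Fin n) ℝ, a.totalDegree ≤ k →
        0 ≤ ∑ x ∈ hB.toFinset, (1 + ∑ i, l i * eval x (T i)) * (eval x a) ^ 2} := by
  refine ⟨#hB.toFinset, ?_⟩
  rw [convexHull_eq_polarSet_polarSet (hB.image _) h0]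
  congr 1
  ext l
  rw [Set.mem_ofPred_eq, forall_sum_mul_eval_sq_nonneg_iff _ le_rfl, mem_polarSet_iff,
    Set.forall_mem_image]
  simp only [Set.Finite.mem_toFinset, ← neg_le_iff_add_nonneg']
  exact forall₂_congr fun x _ => by rw [dotProduct_comm]; rfl

/-- Let `B ⊆ ℝⁿ` be a nonempty finite set, `m` the counting measure on `B`, and
`T : ℝⁿ → ℝ^M` a polynomial map with `0` in the convex hull of `T(B)`.  Then the hierarchy
converges after finitely many steps: for some `k`, the convex hull of `T(B)` equals `Q_k°`,
where `Q_k` is the set of `l` with `∑_{x∈B} (1 + ∑ᵢ lᵢ Tᵢ(x)) a(x)² ≥ 0` for every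
polynomial `a` of degree at most `k`. -/
theorem finite_convergence_of_relaxation {n M : ℕ}
    (B : Set (Fin n → ℝ)) (hBne : B.Nonempty) (hB : B.Finite)
    (T : Fin M → MvPolynomial (Fin n) ℝ)
    (h0 : (0 : Fin M → ℝ) ∈ convexHull ℝ ((fun x i => eval x (T i)) '' B)) :
    ∃ k : ℕ, convexHull ℝ ((fun (x : Fin n → ℝ) (i : Fin M) => eval x (T i)) '' B) =
      polarSet {l : Fin M → ℝ | ∀ a : MvPolynomial (Fin n) ℝ, a.totalDegree ≤ k →
        0 ≤ ∑ x ∈ hB.toFinset, (1 + ∑ i, l i * eval x (T i)) * (eval x a) ^ 2} :=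
  finite_convergence_of_relaxation_general B hB T h0
end

section
/- Let C ⊆ V and D ⊆ W be almost compact cones in finite-dimensional real vector spaces and let f : V → W be a linear map with f(C) ⊆ D. Then f is injective and f⁻¹(D) = C if and only if the closure of f*(D*) equals C*, where f* : W* → V* is the transpose map φ ↦ φ ∘ f. -/
/-- The dual cone `C* = {φ : V* | φ ≥ 0 on C}` (in finite dimension, all linear
functionals are continuous). -/
def dualConeOf {V : Type*} [NormedAddCommGroup V] [NormedSpace ℝ V] (C : Set V) :
    Set (V →L[ℝ] ℝ) :=
  {φ | ∀ x ∈ C, 0 ≤ φ x}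
open Module

/-- Evaluation surjectivity: every continuous functional on the continuous dual of a
finite-dimensional space is evaluation at a point. -/
lemma exists_eval {V : Type*} [NormedAddCommGroup V] [NormedSpace ℝ V]
    [FiniteDimensional ℝ V] (g : (V →L[ℝ] ℝ) →L[ℝ] ℝ) :
    ∃ x : V, ∀ φ : V →L[ℝ] ℝ, g φ = φ x := by
  let E : V →ₗ[ℝ] Module.Dual ℝ (V →L[ℝ] ℝ) :=
    { toFun := fun x =>
        { toFun := fun φ => φ x
          map_add' := fun φ ψ => rfl
          map_smul' := fun c φ => rfl }
      map_add' := fun x y => by ext φ; simp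
      map_smul' := fun c x => by ext φ; simp }
  have hinj : Function.Injective E := by
    intro x y hxy
    have h : ∀ φ : V →L[ℝ] ℝ, φ x = φ y := fun φ => LinearMap.congr_fun hxy φ
    have h2 : ∀ ψ : Module.Dual ℝ V, ψ (x - y) = 0 := by
      intro ψ
      have := h (LinearMap.toContinuousLinearMap ψ)
      simp only [LinearMap.coe_toContinuousLinearMap'] at this
      simp [map_sub, this]
    exact sub_eq_zero.mp ((Module.forall_dual_apply_eq_zero_iff ℝ (x - y)).mp h2)
  have hfr1 : Module.finrank ℝ (V →L[ℝ] ℝ) = Module.finrank ℝ V := by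
    rw [← (LinearMap.toContinuousLinearMap :
        (V →ₗ[ℝ] ℝ) ≃ₗ[ℝ] (V →L[ℝ] ℝ)).finrank_eq]
    exact Subspace.dual_finrank_eq
  have hfr : Module.finrank ℝ V = Module.finrank ℝ (Module.Dual ℝ (V →L[ℝ] ℝ)) := by
    rw [Subspace.dual_finrank_eq, hfr1]
  have hsurj : Function.Surjective E :=
    (LinearMap.injective_iff_surjective_of_finrank_eq_finrank hfr).mp hinj
  obtain ⟨x, hx⟩ := hsurj (g : (V →L[ℝ] ℝ) →ₗ[ℝ] ℝ)
  exact ⟨x, fun φ => (LinearMap.congr_fun hx φ).symm⟩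

/-- Bipolar theorem for closed convex cones. -/
lemma bipolar {V : Type*} [NormedAddCommGroup V] [NormedSpace ℝ V]
    (C : Set V) (hadd : ∀ x ∈ C, ∀ y ∈ C, x + y ∈ C)
    (hsmul : ∀ c : ℝ, 0 ≤ c → ∀ x ∈ C, c • x ∈ C)
    (hcl : IsClosed C) (h0 : (0 : V) ∈ C)
    (x : V) (hx : ∀ φ : V →L[ℝ] ℝ, (∀ y ∈ C, 0 ≤ φ y) → 0 ≤ φ x) : x ∈ C := by
  by_contra hxC
  have hconv : Convex ℝ C := by
    intro a ha b hb s t hs ht hst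
    exact hadd _ (hsmul s hs a ha) _ (hsmul t ht b hb)
  obtain ⟨g, u, hgu, hux⟩ := geometric_hahn_banach_closed_point hconv hcl hxC
  have hu0 : 0 < u := by have := hgu 0 h0; simpa using this
  have hneg : ∀ a ∈ C, g a ≤ 0 := by
    intro a ha
    by_contra hga
    push_neg at hga
    have ht : (0:ℝ) ≤ u / g a := le_of_lt (div_pos hu0 hga)
    have := hgu _ (hsmul _ ht a ha)
    rw [map_smul] at this
    simp only [smul_eq_mul] at this
    rw [div_mul_cancel₀ _ (ne_of_gt hga)] at this
    exact lt_irrefl _ this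
  have : 0 ≤ (-g) x := hx (-g) (fun y hy => by simpa using hneg y hy)
  simp only [ContinuousLinearMap.neg_apply] at this
  linarith [hux, hgu 0 h0, this]

/-- A morphism `f : C → D` of almost compact cones is strongly injective (`f` injective and
`f⁻¹(D) = C`) if and only if its transpose `f* : D* → C*`, `φ ↦ φ ∘ f`, has dense image
(`closure (f*(D*)) = C*`). -/
theorem stronglyInjective_iff_transpose_denseImage {V W : Type*}
    [NormedAddCommGroup V] [NormedSpace ℝ V] [FiniteDimensional ℝ V]
    [NormedAddCommGroup W] [NormedSpace ℝ W] [FiniteDimensional ℝ W]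
    (C : Set V) (D : Set W) (hC : IsACCone C) (hD : IsACCone D)
    (f : V →ₗ[ℝ] W) (hf : ∀ x ∈ C, f x ∈ D) :
    (Function.Injective f ∧ f ⁻¹' D = C) ↔
      closure ((fun φ : W →L[ℝ] ℝ =>
          LinearMap.toContinuousLinearMap ((φ : W →ₗ[ℝ] ℝ).comp f)) '' dualConeOf D)
        = dualConeOf C := by
  obtain ⟨hCadd, hCsmul, hCcl, hCpt, hCint⟩ := hC
  obtain ⟨hDadd, hDsmul, hDcl, hDpt, hDint⟩ := hD
  have h0C : (0 : V) ∈ C := by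
    have : (0 : V) ∈ ({0} : Set V) := rfl
    rw [← hCpt] at this; exact this.1
  have h0D : (0 : W) ∈ D := by
    have : (0 : W) ∈ ({0} : Set W) := rfl
    rw [← hDpt] at this; exact this.1
  set T : (W →L[ℝ] ℝ) → (V →L[ℝ] ℝ) := fun φ =>
    LinearMap.toContinuousLinearMap ((φ : W →ₗ[ℝ] ℝ).comp f) with hT
  have hTapp : ∀ (φ : W →L[ℝ] ℝ) (x : V), T φ x = φ (f x) := by
    intro φ x
    simp [hT, LinearMap.coe_toContinuousLinearMap']
  set K : Set (V →L[ℝ] ℝ) := T '' dualConeOf D with hK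
  -- closure K ⊆ dualConeOf C always, etc.
  have hKC : ∀ {x : V}, f x ∈ D → ∀ χ ∈ K, 0 ≤ χ x := by
    intro x hfx χ hχ
    obtain ⟨φ, hφ, rfl⟩ := hχ
    rw [hTapp]
    exact hφ _ hfx
  have hCdualClosed : IsClosed (dualConeOf C) := by
    have : dualConeOf C = ⋂ x ∈ C, {φ : V →L[ℝ] ℝ | 0 ≤ φ x} := by
      ext φ; simp [dualConeOf, Set.mem_iInter]
    rw [this]
    refine isClosed_biInter fun x _ => ?_
    exact isClosed_le continuous_const (ContinuousLinearMap.apply ℝ ℝ x).continuous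
  constructor
  · rintro ⟨hinj, hpre⟩
    apply le_antisymm
    · -- closure K ⊆ C*
      refine closure_minimal ?_ hCdualClosed
      rintro χ ⟨φ, hφ, rfl⟩ x hx
      rw [hTapp]
      exact hφ _ (hf x hx)
    · -- C* ⊆ closure K : bipolar in the dual space
      intro ψ hψ
      by_contra hψK
      have hKconv : Convex ℝ K := by
        intro a ha b hb s t hs ht hst
        obtain ⟨φa, hφa, rfl⟩ := ha
        obtain ⟨φb, hφb, rfl⟩ := hb
        refine ⟨s • φa + t • φb, ?_, ?_⟩
        · intro y hy
          have := hφa y hy; have := hφb y hy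
          simp only [ContinuousLinearMap.add_apply, ContinuousLinearMap.coe_smul',
            Pi.smul_apply, smul_eq_mul]
          positivity
        · ext x
          simp [hTapp, hT, LinearMap.coe_toContinuousLinearMap']
      have hKclconv : Convex ℝ (closure K) := hKconv.closure
      obtain ⟨g, u, hgu, hgψ⟩ :=
        geometric_hahn_banach_closed_point hKclconv isClosed_closure hψK
      have h0K : (0 : V →L[ℝ] ℝ) ∈ K := by
        refine ⟨0, fun y _ => le_refl 0, ?_⟩
        ext x; simp [hTapp]
      have hu0 : 0 < u := by have := hgu 0 (subset_closure h0K); simpa using this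
      have hneg : ∀ χ ∈ K, g χ ≤ 0 := by
        intro χ hχ
        by_contra hgχ
        push_neg at hgχ
        have hKsmul : ∀ c : ℝ, 0 ≤ c → (c • χ) ∈ K := by
          intro c hc
          obtain ⟨φ, hφ, rfl⟩ := hχ
          refine ⟨c • φ, ?_, ?_⟩
          · intro y hy
            have := hφ y hy
            simp only [ContinuousLinearMap.coe_smul', Pi.smul_apply, smul_eq_mul]
            positivity
          · ext x; simp [hTapp]
        have ht : (0:ℝ) ≤ u / g χ := le_of_lt (div_pos hu0 hgχ)
        have := hgu _ (subset_closure (hKsmul _ ht))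
        rw [map_smul] at this
        simp only [smul_eq_mul] at this
        rw [div_mul_cancel₀ _ (ne_of_gt hgχ)] at this
        exact lt_irrefl _ this
      obtain ⟨x₀, hx₀⟩ := exists_eval g
      -- for every χ ∈ K, χ (-x₀) ≥ 0, hence ψ (-x₀) ≥ 0 fails
      have hfx : f (-x₀) ∈ D := by
        apply bipolar D hDadd hDsmul hDcl h0D
        intro φ hφD
        have : T φ ∈ K := ⟨φ, hφD, rfl⟩
        have h1 : g (T φ) ≤ 0 := hneg _ this
        rw [hx₀] at h1
        have : T φ (-x₀) = φ (f (-x₀)) := hTapp _ _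
        rw [← this]
        simp only [map_neg]
        linarith
      have hxC : -x₀ ∈ C := by rw [← hpre]; exact hfx
      have := hψ _ hxC
      have hgψ' : g ψ = ψ x₀ := hx₀ ψ
      simp only [map_neg] at this
      linarith
  · intro hclK
    have hpre : f ⁻¹' D = C := by
      apply Set.Subset.antisymm
      · intro x hx
        apply bipolar C hCadd hCsmul hCcl h0C
        intro ψ hψ
        have hψcl : ψ ∈ closure K := by rw [hclK]; exact hψ
        have hclosed : IsClosed {χ : V →L[ℝ] ℝ | 0 ≤ χ x} :=
          isClosed_le continuous_const (ContinuousLinearMap.apply ℝ ℝ x).continuous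
        exact closure_minimal (fun χ hχ => hKC hx χ hχ) hclosed hψcl
      · intro x hx; exact hf x hx
    have hker : ∀ z : V, f z = 0 → z = 0 := by
      intro z hz
      have h1 : z ∈ C := by rw [← hpre]; simp [Set.mem_preimage, hz, h0D]
      have h2 : -z ∈ C := by
        rw [← hpre]; simp [Set.mem_preimage, map_neg, hz, h0D]
      have : z ∈ C ∩ (-C) := ⟨h1, by simpa using h2⟩
      rw [hCpt] at this
      exact this
    refine ⟨?_, hpre⟩
    intro a b hab
    have : f (a - b) = 0 := by rw [map_sub, hab, sub_self]
    exact sub_eq_zero.mp (hker _ this)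
end
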